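/- arXiv:0909.3733 — 10 statements merged into one kernel-verified Lean document; each statement's English description precedes it below -/
import Mathlib

section
/- Let p > 5 be a prime. Then 5 · ∑_{k=0}^{p-1} 2^k · binom(3k, k) ≡ 6·(-1)^{(p-1)/2} − 1 (mod p). -/
/-!
Over `𝔽_p`, with `f = 2(1 + X)³`, the summand `2^k binom(3k, k)` is the coefficient of `X^k` in
`f^k`, so the sum is the coefficient of `X^(p-1)` in `P = ∑ f^k X^(p-1-k)`. Since
`P (f - X) = f^p - X^p ≡ f(0) = 2 (mod X^p)` by Frobenius, `P ≡ 2 / (f - X)` modulo `X^p`, where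
`f - X = (X + 2)(2X² + 2X + 1)`. Multiplying by the expansion of `1 / (X + 2)` turns the
coefficient of `X^(p-1)` into the value at `-2` of the truncation of
`1 / (2X² + 2X + 1) = (2X² - 2X + 1) / (1 + 4X⁴)`, a geometric sum in `-64`. Its closed form
involves `(-4)^⌊(p+1)/4⌋ = (-1)^⌊(p+1)/4⌋ 2^(2⌊(p+1)/4⌋)`, which is `1` or `2` according to
`p mod 4` by the second supplement to quadratic reciprocity, `2^((p-1)/2) = (-1)^⌊(p+1)/4⌋`.
-/

open Polynomial Finset

theorem coeff_geom_sum₂_mul_eq_eval {R : Type*} [CommSemiring R] {n : ℕ} (a : R) {V : R[X]}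
    (hV : V.natDegree < n) :
    ((∑ i ∈ range n, X ^ i * C a ^ (n - 1 - i)) * V).coeff (n - 1) = V.eval a := by
  rw [sum_mul, finsetSum_coeff, eval_eq_sum_range' hV, ← sum_range_reflect]
  refine sum_congr rfl fun i hi => ?_
  rw [mem_range] at hi
  rw [← C_pow, mul_right_comm, coeff_mul_C, coeff_X_pow_mul', if_pos (by omega),
    Nat.sub_sub_self (by omega)]

theorem sum_coeff_pow_eq_of_X_pow_dvd {K : Type*} [Field K] [Fintype K] (f V : K[X])
    (hV : X ^ Fintype.card K ∣ (f - X) * V - 1) :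
    ∑ k ∈ range (Fintype.card K), (f ^ k).coeff k = f.coeff 0 * V.coeff (Fintype.card K - 1) := by
  set q := Fintype.card K
  have hq : 0 < q := Fintype.card_pos
  set P := ∑ k ∈ range q, f ^ k * X ^ (q - 1 - k)
  have hP : P.coeff (q - 1) = ∑ k ∈ range q, (f ^ k).coeff k := by
    rw [finsetSum_coeff]
    refine sum_congr rfl fun k hk => ?_
    rw [coeff_mul_X_pow', if_pos (Nat.sub_le _ _),
      Nat.sub_sub_self (Nat.le_sub_one_of_lt (mem_range.mp hk))]
  have hPf : P * (f - X) = expand K q f - X ^ q := by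
    rw [geom_sum₂_mul, FiniteField.expand_card]
  have hexpand : X ^ q ∣ expand K q f - C (f.coeff 0) := by
    refine X_pow_dvd_iff.mpr fun d hd => ?_
    rcases Nat.eq_zero_or_pos d with rfl | hd0
    · simp [coeff_expand hq]
    · rw [coeff_sub, coeff_expand hq, coeff_C, if_neg (Nat.not_dvd_of_pos_of_lt hd0 hd),
        if_neg hd0.ne', sub_zero]
  have hcongr : X ^ q ∣ P - C (f.coeff 0) * V := by
    have e : P - C (f.coeff 0) * V
        = (expand K q f - C (f.coeff 0)) * V - X ^ q * V - P * ((f - X) * V - 1) := by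
      linear_combination V * hPf
    rw [e]
    exact ((dvd_mul_of_dvd_left hexpand V).sub (dvd_mul_right _ _)).sub (dvd_mul_of_dvd_right hV P)
  have := X_pow_dvd_iff.mp hcongr (q - 1) (by omega)
  rwa [coeff_sub, coeff_C_mul, sub_eq_zero, hP] at this

theorem sum_two_pow_mul_choose_eq_eval {p : ℕ} [Fact p.Prime] (hp : p ≠ 2) {W : (ZMod p)[X]}
    (hW : X ^ p ∣ (2 * X ^ 2 + 2 * X + 1) * W - 1) (hdeg : W.natDegree < p) :
    ∑ k ∈ range p, (2 : ZMod p) ^ k * ((3 * k).choose k : ZMod p) = W.eval (-2) := by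
  have h2 : (2 : ZMod p) ≠ 0 := Ring.two_ne_zero ((ZMod.ringChar_zmod_n p).symm ▸ hp)
  set G := ∑ i ∈ range p, X ^ i * C (-2 : ZMod p) ^ (p - 1 - i)
  have hG : X ^ p ∣ (X - C (-2)) * (C 2⁻¹ * G) - 1 := by
    have h : G * (X - C (-2)) = X ^ p - C (-2) := by rw [geom_sum₂_mul, ← C_pow, ZMod.pow_card]
    have hc : (C 2⁻¹ * C (-2) : (ZMod p)[X]) = -1 := by rw [← C_mul]; simp [h2]
    exact Dvd.intro (C 2⁻¹) (by linear_combination -C 2⁻¹ * h + hc)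
  have hf : C 2 * (1 + X) ^ 3 - X = (X - C (-2)) * (2 * X ^ 2 + 2 * X + 1 : (ZMod p)[X]) := by
    simp only [map_neg, C_ofNat]; ring
  have key := sum_coeff_pow_eq_of_X_pow_dvd (C 2 * (1 + X) ^ 3) (C 2⁻¹ * G * W) (by
    rw [ZMod.card, hf]
    have e : (X - C (-2)) * (2 * X ^ 2 + 2 * X + 1) * (C 2⁻¹ * G * W) - 1
        = ((X - C (-2)) * (C 2⁻¹ * G) - 1) * ((2 * X ^ 2 + 2 * X + 1) * W)
          + ((2 * X ^ 2 + 2 * X + 1) * W - 1) := by ring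
    rw [e]
    exact (dvd_mul_of_dvd_left hG _).add hW)
  simp only [ZMod.card, mul_pow, ← C_pow, ← pow_mul, coeff_C_mul, coeff_one_add_X_pow,
    Nat.choose_zero_right, Nat.cast_one, mul_one] at key
  rw [key, mul_assoc, coeff_C_mul, coeff_geom_sum₂_mul_eq_eval _ hdeg, mul_inv_cancel_left₀ h2]

section invTrunc

variable {R : Type*} [CommRing R]

-- The first `N` terms of the power series `1 / (2X² + 2X + 1) = (2X² - 2X + 1) / (1 + 4X⁴)`.
noncomputable def invTrunc (N : ℕ) : R[X] :=
  (2 * X ^ 2 - 2 * X + 1) * ∑ k ∈ range N, (-4 * X ^ 4) ^ k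

theorem mul_invTrunc (N : ℕ) :
    (2 * X ^ 2 + 2 * X + 1) * invTrunc N = (1 - (-4) ^ N * X ^ (4 * N) : R[X]) := by
  rw [invTrunc]
  linear_combination -geom_sum_mul (-4 * X ^ 4 : R[X]) N

theorem natDegree_invTrunc_le (N : ℕ) : (invTrunc N : R[X]).natDegree ≤ 4 * N - 2 := by
  rcases N with _ | n
  · simp [invTrunc]
  have hsum : (∑ k ∈ range (n + 1), (-4 * X ^ 4 : R[X]) ^ k).natDegree ≤ 4 * n := by
    refine natDegree_sum_le_of_forall_le _ _ fun k hk => natDegree_pow_le.trans ?_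
    have : (-4 * X ^ 4 : R[X]).natDegree ≤ 4 := by compute_degree
    have := Nat.mul_le_mul (Nat.le_of_lt_succ (mem_range.mp hk)) this
    omega
  have hquad : (2 * X ^ 2 - 2 * X + 1 : R[X]).natDegree ≤ 2 := by compute_degree
  exact natDegree_mul_le.trans (by omega)

theorem five_mul_eval_invTrunc (N : ℕ) :
    5 * (invTrunc N : R[X]).eval (-2) = 1 - (-64) ^ N := by
  have hterm (k : ℕ) : ((-4 * X ^ 4 : R[X]) ^ k).eval (-2) = (-64) ^ k := by norm_num
  rw [invTrunc, eval_mul, eval_finsetSum]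
  simp only [hterm, eval_add, eval_sub, eval_mul, eval_pow, eval_X, eval_one, eval_ofNat]
  linear_combination -geom_sum_mul (-64 : R) N

end invTrunc

theorem two_pow_div_two_eq_neg_one_pow {p : ℕ} [Fact p.Prime] (hp : p ≠ 2) :
    (2 : ZMod p) ^ (p / 2) = (-1) ^ ((p + 1) / 4) := by
  have h := legendreSym.eq_pow p 2
  rw [legendreSym.at_two hp, ZMod.χ₈_nat_eq_if_mod_eight] at h
  have hodd : p % 2 = 1 := (Fact.out : p.Prime).eq_two_or_odd.resolve_left hp
  push_cast at h
  rw [← h, neg_one_pow_eq_pow_mod_two]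
  have : p % 8 = 1 ∨ p % 8 = 3 ∨ p % 8 = 5 ∨ p % 8 = 7 := by omega
  rcases this with h8 | h8 | h8 | h8 <;>
    simp [hodd, h8, show (p + 1) / 4 % 2 = (p % 8 + 1) / 4 % 2 by omega]

theorem neg_four_pow_of_mod_four_eq_one {p : ℕ} [Fact p.Prime] (h : p % 4 = 1) :
    (-4 : ZMod p) ^ (p / 4) = 1 := by
  have hp : p ≠ 2 := by omega
  have h2 : (2 : ZMod p) ≠ 0 := Ring.two_ne_zero ((ZMod.ringChar_zmod_n p).symm ▸ hp)
  rw [show (-4 : ZMod p) = -1 * 2 ^ 2 by norm_num, mul_pow, show p / 4 = (p + 1) / 4 by omega,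
    ← two_pow_div_two_eq_neg_one_pow hp, ← pow_mul, ← pow_add,
    show p / 2 + 2 * ((p + 1) / 4) = p - 1 by omega, ZMod.pow_card_sub_one_eq_one h2]

theorem neg_four_pow_of_mod_four_eq_three {p : ℕ} [Fact p.Prime] (h : p % 4 = 3) :
    (-4 : ZMod p) ^ ((p + 1) / 4) = 2 := by
  have hp : p ≠ 2 := by omega
  rw [show (-4 : ZMod p) = -1 * 2 ^ 2 by norm_num, mul_pow,
    ← two_pow_div_two_eq_neg_one_pow hp, ← pow_mul, ← pow_add,
    show p / 2 + 2 * ((p + 1) / 4) = p by omega, ZMod.pow_card]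

theorem five_mul_sum_of_mod_four_eq_one {p : ℕ} [Fact p.Prime] (h : p % 4 = 1) :
    5 * ∑ k ∈ range p, (2 : ZMod p) ^ k * ((3 * k).choose k : ZMod p) = 5 := by
  set N := p / 4
  have hN : 4 * N + 1 = p := by omega
  have hε : (-4 : ZMod p) ^ N = 1 := neg_four_pow_of_mod_four_eq_one h
  -- As `4N = p - 1`, the truncation below degree `p` of the next term
  -- `(2X² - 2X + 1)(-4X⁴)^N` of the series is `(-4)^N X^(4N)`.
  rw [sum_two_pow_mul_choose_eq_eval (W := invTrunc N + (-4) ^ N * X ^ (4 * N)) (by omega)]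
  · have h64 : (-64 : ZMod p) ^ N = 1 := by
      rw [show (-64 : ZMod p) = (-4) ^ 3 by norm_num, ← pow_mul, mul_comm, pow_mul, hε, one_pow]
    have h16 : (-2 : ZMod p) ^ (4 * N) = 1 := by
      rw [pow_mul, show (-2 : ZMod p) ^ 4 = (-4) ^ 2 by norm_num, ← pow_mul, mul_comm, pow_mul,
        hε, one_pow]
    simp only [eval_add, eval_mul, eval_pow, eval_neg, eval_ofNat, eval_X, mul_add,
      five_mul_eval_invTrunc, h64, hε, h16]
    ring
  · have hX : (X : (ZMod p)[X]) ^ p = X ^ (4 * N) * X := by rw [← pow_succ, hN]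
    exact Dvd.intro ((-4) ^ N * (2 * X + 2))
      (by linear_combination ((-4) ^ N * (2 * X + 2)) * hX - mul_invTrunc (R := ZMod p) N)
  · have hmon : ((-4) ^ N * X ^ (4 * N) : (ZMod p)[X]).natDegree ≤ 4 * N := by compute_degree
    have htrunc := natDegree_invTrunc_le (R := ZMod p) N
    exact (natDegree_add_le _ _).trans_lt (max_lt (by omega) (by omega))

theorem five_mul_sum_of_mod_four_eq_three {p : ℕ} [Fact p.Prime] (h : p % 4 = 3) :
    5 * ∑ k ∈ range p, (2 : ZMod p) ^ k * ((3 * k).choose k : ZMod p) = -7 := by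
  set N := (p + 1) / 4
  have hN : 4 * N = p + 1 := by omega
  have hδ : (-4 : ZMod p) ^ N = 2 := neg_four_pow_of_mod_four_eq_three h
  rw [sum_two_pow_mul_choose_eq_eval (W := invTrunc N) (by omega)]
  · rw [five_mul_eval_invTrunc, show (-64 : ZMod p) = (-4) ^ 3 by norm_num, ← pow_mul, mul_comm,
      pow_mul, hδ]
    norm_num
  · have hX : (X : (ZMod p)[X]) ^ (4 * N) = X ^ p * X := by rw [← pow_succ, hN]
    exact Dvd.intro (-(-4) ^ N * X)
      (by linear_combination (-4) ^ N * hX - mul_invTrunc (R := ZMod p) N)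
  · have := natDegree_invTrunc_le (R := ZMod p) N
    omega

theorem stmt_2 (p : ℕ) (hp : p.Prime) (h5 : 5 < p) :
    (5 * ∑ k ∈ Finset.range p, 2 ^ k * ((3 * k).choose k : ℤ)) ≡
      6 * (-1) ^ ((p - 1) / 2) - 1 [ZMOD (p : ℤ)] := by
  have := Fact.mk hp
  rw [← ZMod.intCast_eq_intCast_iff]
  push_cast
  rcases hp.eq_two_or_odd with rfl | hodd
  · omega
  rcases (by omega : p % 4 = 1 ∨ p % 4 = 3) with h4 | h4
  · rw [five_mul_sum_of_mod_four_eq_one h4, Even.neg_one_pow (by rw [Nat.even_iff]; omega)]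
    norm_num
  · rw [five_mul_sum_of_mod_four_eq_three h4, Odd.neg_one_pow (by rw [Nat.odd_iff]; omega)]
    norm_num
end

section
/- Let p be an odd prime. Then, in the field ℤ/pℤ, ∑_{k=1}^{p-1} 2^k · binom(3k+1, k) · k^{-1} = 2((-1)^{(p-1)/2} − 1), where k^{-1} denotes the inverse of k in ℤ/pℤ. -/
/-!
In `ZMod p`, `k⁻¹ = (-1)^(k+1) binom(p,k)/p` for `0 < k < p`, so it suffices to compute
`∑_{0<k<p} (-1)^(k+1) binom(p,k) 2^k binom(3k+1,k)` modulo `p²`. Together with the terms `k = 0`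
and `k = p` this is minus the coefficient of `X^p` in `(1 + X) (X + 2)^p (2X² + 2X + 1)^p`.
As `f^p ≡ f(X^p) (mod p)`, modulo `p²` that coefficient only involves the constant coefficient of
one of the two `p`-th powers. What is left is evaluated by Lucas' theorem,
`binom(np, p) ≡ n`, `binom(p, (p-1)/2) ≡ 2p (-1)^((p-1)/2) (mod p²)` and Fermat's little theorem
for `2`.
-/

open Finset Polynomial

theorem ZMod.intCast_mul_eq_zero_of_dvd {n : ℕ} {a b : ℤ} (ha : (n : ℤ) ∣ a)
    (hb : (n : ℤ) ∣ b) :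
    ((a * b : ℤ) : ZMod (n ^ 2)) = 0 := by
  rw [ZMod.intCast_zmod_eq_zero_iff_dvd, Nat.cast_pow, sq]
  exact mul_dvd_mul ha hb

theorem ZMod.natCast_mul_eq_of_dvd_of_modEq {n a b c : ℕ} (ha : n ∣ a) (hbc : b ≡ c [MOD n]) :
    (a : ZMod (n ^ 2)) * b = a * c := by
  rw [← Nat.cast_mul, ← Nat.cast_mul, ZMod.natCast_eq_natCast_iff, sq]
  exact (Nat.ModEq.mul_left' a hbc).of_dvd (mul_dvd_mul_right ha n)

theorem ZMod.natCast_mul_intCast_eq_iff {n : ℕ} (hn : n ≠ 0) {a b : ℤ} :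
    (n * a : ZMod (n ^ 2)) = n * b ↔ (a : ZMod n) = b := by
  have e (c : ℤ) : (n * c : ZMod (n ^ 2)) = ((n * c : ℤ) : ZMod (n ^ 2)) := by push_cast; rfl
  rw [e, e, ZMod.intCast_eq_intCast_iff, ZMod.intCast_eq_intCast_iff, Nat.cast_pow, sq]
  exact ⟨Int.ModEq.mul_left_cancel' (by exact_mod_cast hn), Int.ModEq.mul_left'⟩

theorem Nat.sum_Ico_choose_two_mul_add_one (h : ℕ) :
    ∑ i ∈ Ico (h + 1) (2 * h + 1), (2 * h + 1).choose i + 1 = 4 ^ h := by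
  have hsum := Nat.sum_range_choose (2 * h + 1)
  rw [sum_range_succ, ← sum_range_add_sum_Ico _ (show h + 1 ≤ 2 * h + 1 by omega),
    Nat.sum_range_choose_halfway, Nat.choose_self, pow_succ, pow_mul, show 2 ^ 2 = 4 from rfl]
    at hsum
  omega

theorem Polynomial.sum_choose_mul_pow_mul_choose_three_mul_add_one {R : Type*} [CommRing R]
    (n : ℕ) (c : R) :
    ∑ k ∈ range (n + 1), (n.choose k : R) * c ^ k * ((3 * k + 1).choose k : R) =
      ((1 + X) * (X + C c * (1 + X) ^ 3) ^ n).coeff n := by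
  rw [add_comm X, add_pow, mul_sum, finsetSum_coeff]
  refine sum_congr rfl fun k hk => ?_
  have : (1 + X) * ((C c * (1 + X) ^ 3) ^ k * X ^ (n - k) * (n.choose k : R[X]))
      = C ((n.choose k : R) * c ^ k) * (1 + X) ^ (3 * k + 1) * X ^ (n - k) := by
    rw [mul_pow, ← pow_mul, map_mul, map_pow, map_natCast]
    ring
  rw [this, coeff_mul_X_pow', if_pos (Nat.sub_le n k), coeff_C_mul, coeff_one_add_X_pow,
    Nat.sub_sub_self (mem_range_succ_iff.mp hk)]

theorem Polynomial.sum_choose_mul_neg_two_pow_mul_choose_three_mul_add_one {n : ℕ}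
    (hn : Odd n) :
    ∑ k ∈ range (n + 1), (n.choose k : ℤ) * (-2) ^ k * (3 * k + 1).choose k =
      -((1 + X) * ((X + C 2) ^ n * (2 * X ^ 2 + 2 * X + 1) ^ n) : ℤ[X]).coeff n := by
  rw [sum_choose_mul_pow_mul_choose_three_mul_add_one, ← coeff_neg, ← mul_neg, ← mul_pow,
    ← hn.neg_pow, map_neg, map_ofNat]
  congr 3
  ring

theorem Polynomial.coeff_one_add_X_sq_add_one_pow {R : Type*} [CommRing R] (n m : ℕ) :
    (((1 + X) ^ 2 + 1) ^ n : R[X]).coeff m =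
      ∑ i ∈ range (n + 1), (n.choose i : R) * (2 * i).choose m := by
  rw [add_pow, finsetSum_coeff]
  refine sum_congr rfl fun i _ => ?_
  rw [one_pow, mul_one, ← pow_mul, coeff_mul_natCast, coeff_one_add_X_pow, mul_comm]

theorem Polynomial.two_pow_mul_coeff_two_mul_X_sq_add_two_mul_X_add_one_pow {R : Type*}
    [CommRing R] (n m : ℕ) :
    2 ^ n * ((2 * X ^ 2 + 2 * X + 1) ^ n : R[X]).coeff m =
      2 ^ m * ∑ i ∈ range (n + 1), (n.choose i : R) * (2 * i).choose m := by
  have h : C (2 ^ n) * (2 * X ^ 2 + 2 * X + 1 : R[X]) ^ n =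
      (((1 + X) ^ 2 + 1) ^ n).comp (C 2 * X) := by
    rw [pow_comp, add_comp, pow_comp, add_comp, one_comp, X_comp, C_pow, ← mul_pow, map_ofNat]
    congr 1
    ring
  rw [← coeff_one_add_X_sq_add_one_pow, ← coeff_C_mul, h, comp_C_mul_X_coeff, mul_comm]

section Prime

variable {p : ℕ} [hp : Fact p.Prime]

theorem Polynomial.prime_dvd_coeff_pow (f : ℤ[X]) {j : ℕ} (hj : ¬ p ∣ j) :
    (p : ℤ) ∣ (f ^ p).coeff j := by
  rw [← ZMod.intCast_zmod_eq_zero_iff_dvd, ← eq_intCast (Int.castRingHom (ZMod p)),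
    ← coeff_map, Polynomial.map_pow, ← ZMod.expand_card, coeff_expand hp.out.pos, if_neg hj]

theorem Polynomial.coeff_pow_mul_pow_cast (f g : ℤ[X]) {m : ℕ} (hm : 0 < m) (hmp : m ≤ p) :
    (((f ^ p * g ^ p).coeff m : ℤ) : ZMod (p ^ 2)) =
      (f ^ p).coeff 0 * (g ^ p).coeff m + (f ^ p).coeff m * (g ^ p).coeff 0 := by
  obtain ⟨m, rfl⟩ : ∃ m', m = m' + 1 := ⟨m - 1, by omega⟩
  rw [coeff_mul, Nat.sum_antidiagonal_eq_sum_range_succ_mk, sum_range_succ, sum_range_succ']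
  have hmid : ∀ i ∈ range m,
      (((f ^ p).coeff (i + 1) * (g ^ p).coeff (m + 1 - (i + 1)) : ℤ) : ZMod (p ^ 2)) = 0 := by
    intro i hi
    have hi := mem_range.mp hi
    exact ZMod.intCast_mul_eq_zero_of_dvd
      (prime_dvd_coeff_pow f (Nat.not_dvd_of_pos_of_lt (by omega) (by omega)))
      (prime_dvd_coeff_pow g (Nat.not_dvd_of_pos_of_lt (by omega) (by omega)))
  push_cast [Int.cast_sum] at hmid ⊢
  rw [sum_eq_zero hmid]
  simp

theorem Nat.choose_succ_mul_prime_cast (n : ℕ) {m : ℕ} (hm : 0 < m) (hmp : m ≤ p) :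
    (((n + 1) * p).choose m : ZMod (p ^ 2)) = (n * p).choose m + p.choose m := by
  have h := coeff_pow_mul_pow_cast ((1 + X) ^ n) (1 + X) hm hmp
  rw [← pow_mul, ← pow_add, ← add_one_mul] at h
  simp only [coeff_one_add_X_pow, Nat.choose_zero_right] at h
  push_cast at h
  linear_combination h

theorem Nat.choose_mul_prime_self_cast (n : ℕ) : ((n * p).choose p : ZMod (p ^ 2)) = n := by
  induction n with
  | zero => simp [Nat.choose_eq_zero_of_lt hp.out.pos]
  | succ n ih =>
    rw [choose_succ_mul_prime_cast n hp.out.pos le_rfl, ih, Nat.choose_self]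
    push_cast
    ring

theorem Nat.choose_mul_prime_pred_cast (n : ℕ) :
    ((n * p).choose (p - 1) : ZMod (p ^ 2)) = n * p := by
  have hp2 := hp.out.two_le
  induction n with
  | zero => simp [Nat.choose_eq_zero_of_lt (show 0 < p - 1 by omega)]
  | succ n ih =>
    rw [choose_succ_mul_prime_cast n (by omega) (by omega), ih, Nat.choose_symm (by omega),
      Nat.choose_one_right]
    push_cast
    ring

theorem Nat.choose_mul_prime_add_one_self_cast (n : ℕ) :
    ((n * p + 1).choose p : ZMod (p ^ 2)) = n + n * p := by
  have h := Nat.choose_succ_succ' (n * p) (p - 1)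
  rw [Nat.sub_add_cancel hp.out.one_le] at h
  rw [h, Nat.cast_add, choose_mul_prime_pred_cast, choose_mul_prime_self_cast, add_comm]

theorem Nat.choose_prime_add_modEq {r k : ℕ} (hr : r < p) (hk : k < p) :
    (p + r).choose k ≡ r.choose k [MOD p] := by
  have := Choose.choose_modEq_choose_mod_mul_choose_div_nat (n := p + r) (k := k) (p := p)
  rwa [Nat.add_mod_left, Nat.mod_eq_of_lt hr, Nat.mod_eq_of_lt hk, Nat.div_eq_of_lt hk,
    Nat.choose_zero_right, mul_one] at this

theorem Nat.choose_prime_add_self_modEq {r : ℕ} (hr : r < p) :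
    (p + r).choose p ≡ 1 [MOD p] := by
  have := Choose.choose_modEq_choose_mod_mul_choose_div_nat (n := p + r) (k := p) (p := p)
  rwa [Nat.add_mod_left, Nat.mod_eq_of_lt hr, Nat.mod_self, Nat.add_div_left _ hp.out.pos,
    Nat.div_eq_of_lt hr, Nat.div_self hp.out.pos, Nat.choose_zero_right, Nat.choose_self,
    one_mul] at this

theorem Nat.choose_pred_prime_cast {k : ℕ} (hk : k < p) :
    ((p - 1).choose k : ZMod p) = (-1) ^ k := by
  have h := congrArg (Int.cast : ℤ → ZMod p)
    (Int.alternating_sum_range_choose_eq_choose (n := p - 1) (m := k))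
  rw [Nat.sub_add_cancel hp.out.one_le] at h
  push_cast at h
  rw [sum_range_succ', sum_eq_zero fun i hi => ?_] at h
  · have hsq : ((-1 : ZMod p) ^ k) ^ 2 = 1 := by
      rw [← pow_mul, mul_comm, pow_mul, neg_one_sq, one_pow]
    simp only [pow_zero, Nat.choose_zero_right, Nat.cast_one, mul_one, zero_add] at h
    linear_combination -(-1 : ZMod p) ^ k * h - ((p - 1).choose k : ZMod p) * hsq
  · rw [(ZMod.natCast_eq_zero_iff _ p).mpr
      (hp.out.dvd_choose_self (Nat.succ_ne_zero i) (by have := mem_range.mp hi; omega))]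
    simp

theorem ZMod.natCast_mul_eq_neg_one_pow_of_choose_eq_mul {k q : ℕ} (hk : 0 < k) (hkp : k < p)
    (hq : p.choose k = p * q) : (k : ZMod p) * q = (-1) ^ (k + 1) := by
  obtain ⟨j, rfl⟩ : ∃ j, k = j + 1 := ⟨k - 1, by omega⟩
  have h := Nat.add_one_mul_choose_eq (p - 1) j
  rw [Nat.sub_add_cancel hp.out.one_le, hq, mul_assoc] at h
  rw [← Nat.cast_mul, mul_comm, ← Nat.eq_of_mul_eq_mul_left hp.out.pos h,
    Nat.choose_pred_prime_cast (by omega)]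
  ring

theorem ZMod.inv_natCast_eq_neg_one_pow_mul_choose_div {k : ℕ} (hk : 0 < k) (hkp : k < p) :
    (k : ZMod p)⁻¹ = (-1) ^ (k + 1) * (p.choose k / p : ℕ) := by
  have h := ZMod.natCast_mul_eq_neg_one_pow_of_choose_eq_mul hk hkp
    (Nat.mul_div_cancel' (hp.out.dvd_choose_self hk.ne' hkp)).symm
  refine inv_eq_of_mul_eq_one_right ?_
  rw [mul_left_comm, h, ← pow_add, ← two_mul, pow_mul, neg_one_sq, one_pow]

theorem Nat.choose_prime_half_cast {h : ℕ} (hh : 2 * h + 1 = p) :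
    (p.choose h : ZMod (p ^ 2)) = 2 * p * (-1) ^ h := by
  have hp2 := hp.out.two_le
  obtain ⟨q, hq⟩ := hp.out.dvd_choose_self (k := h) (by omega) (by omega)
  have hinv := ZMod.natCast_mul_eq_neg_one_pow_of_choose_eq_mul (by omega) (by omega) hq
  have hzero : ((2 * h + 1 : ℕ) : ZMod p) = 0 := by rw [hh, ZMod.natCast_self]
  have hq' : ((q : ℤ) : ZMod p) = ((2 * (-1) ^ h : ℤ) : ZMod p) := by
    push_cast at hzero ⊢
    linear_combination (q : ZMod p) * hzero - 2 * hinv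
  have := (ZMod.natCast_mul_intCast_eq_iff hp.out.ne_zero).mpr hq'
  push_cast at this
  rw [hq, Nat.cast_mul, this]
  ring

theorem Int.prime_dvd_four_pow_sub_one {h : ℕ} (hh : 2 * h + 1 = p) :
    (p : ℤ) ∣ 4 ^ h - 1 := by
  have := Int.ModEq.pow_card_sub_one_eq_one hp.out (n := 2)
    (Nat.isCoprime_iff_coprime.mpr ((Nat.coprime_primes Nat.prime_two hp.out).mpr (by omega)))
  rw [show p - 1 = 2 * h by omega, pow_mul] at this
  exact this.symm.dvd

theorem Nat.sum_choose_mul_choose_two_mul_self_cast {h : ℕ} (hh : 2 * h + 1 = p) :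
    ∑ i ∈ range (p + 1), (p.choose i : ZMod (p ^ 2)) * (2 * i).choose p = 4 ^ h + 1 := by
  rw [sum_range_succ, ← sum_range_add_sum_Ico _ (show h + 1 ≤ p by omega),
    sum_eq_zero fun i hi => ?low, sum_congr rfl fun i hi => ?high, choose_mul_prime_self_cast 2,
    Nat.choose_self]
  case low =>
    rw [Nat.choose_eq_zero_of_lt (n := 2 * i) (by have := mem_range.mp hi; omega), Nat.cast_zero,
      mul_zero]
  case high =>
    have hi := mem_Ico.mp hi
    rw [ZMod.natCast_mul_eq_of_dvd_of_modEq (hp.out.dvd_choose_self (by omega) hi.2)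
      (show 2 * i = p + (2 * i - p) by omega ▸ choose_prime_add_self_modEq (by omega)),
      Nat.cast_one, mul_one]
  have hsum := congrArg (Nat.cast : ℕ → ZMod (p ^ 2)) (sum_Ico_choose_two_mul_add_one h)
  rw [hh] at hsum
  push_cast at hsum ⊢
  linear_combination hsum

theorem Nat.sum_choose_mul_choose_two_mul_pred_cast {h : ℕ} (hh : 2 * h + 1 = p) :
    ∑ i ∈ range (p + 1), (p.choose i : ZMod (p ^ 2)) * (2 * i).choose (p - 1) =
      2 * p + 2 * p * (-1) ^ h := by
  rw [sum_range_succ, ← sum_range_add_sum_Ico _ (show h + 1 ≤ p by omega), sum_range_succ,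
    sum_eq_zero fun i hi => ?low, sum_eq_zero fun i hi => ?high, choose_mul_prime_pred_cast 2,
    Nat.choose_self, show 2 * h = p - 1 by omega, Nat.choose_self, choose_prime_half_cast hh]
  · push_cast
    ring
  case low =>
    rw [Nat.choose_eq_zero_of_lt (n := 2 * i) (by have := mem_range.mp hi; omega), Nat.cast_zero,
      mul_zero]
  case high =>
    have hi := mem_Ico.mp hi
    have hmod : (2 * i).choose (p - 1) ≡ 0 [MOD p] := by
      rw [show 2 * i = p + (2 * i - p) by omega]
      exact (choose_prime_add_modEq (by omega) (by omega)).trans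
        (by rw [Nat.choose_eq_zero_of_lt (by omega)])
    rw [ZMod.natCast_mul_eq_of_dvd_of_modEq (hp.out.dvd_choose_self (by omega) hi.2) hmod,
      Nat.cast_zero, mul_zero]

theorem Polynomial.coeff_one_add_X_mul_X_add_two_pow_mul_pow_cast {h : ℕ} (hh : 2 * h + 1 = p) :
    ((((1 + X) * ((X + C 2) ^ p * (2 * X ^ 2 + 2 * X + 1) ^ p) : ℤ[X]).coeff p : ℤ) :
        ZMod (p ^ 2)) =
      1 + 2 * p + 2 * 4 ^ h * (4 ^ h + 1) + 4 ^ h * (2 * p + 2 * p * (-1) ^ h) := by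
  have hp2 := hp.out.two_le
  have hX (F : ℤ[X]) : (X * F).coeff p = F.coeff (p - 1) := by
    simpa [hp.out.one_le] using coeff_X_pow_mul' F 1 p
  have hB (m : ℕ) := two_pow_mul_coeff_two_mul_X_sq_add_two_mul_X_add_one_pow (R := ℤ) p m
  have h4 : (2 : ZMod (p ^ 2)) ^ (p - 1) = 4 ^ h := by
    rw [← hh, Nat.add_sub_cancel, pow_mul]
    norm_num
  have h4' : (2 : ZMod (p ^ 2)) ^ p = 2 * 4 ^ h := by
    rw [← h4, ← pow_succ', Nat.sub_add_cancel hp.out.one_le]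
  rw [add_mul, one_mul, coeff_add, hX, Int.cast_add,
    coeff_pow_mul_pow_cast _ _ hp.out.pos le_rfl, coeff_pow_mul_pow_cast _ _ (by omega) (by omega)]
  have hBp := congrArg (Int.cast : ℤ → ZMod (p ^ 2)) (hB p)
  have hBp' := congrArg (Int.cast : ℤ → ZMod (p ^ 2)) (hB (p - 1))
  push_cast at hBp hBp'
  rw [Nat.sum_choose_mul_choose_two_mul_self_cast hh] at hBp
  rw [Nat.sum_choose_mul_choose_two_mul_pred_cast hh, h4] at hBp'
  simp only [coeff_X_add_C_pow, coeff_zero_eq_eval_zero, eval_pow, eval_add, eval_mul, eval_X,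
    eval_C, eval_one, Nat.sub_self, Nat.choose_self, Nat.choose_symm (show 1 ≤ p by omega),
    Nat.choose_one_right, Nat.sub_sub_self (show 1 ≤ p by omega)]
  push_cast
  linear_combination hBp + hBp' + (1 + 4 ^ h : ZMod (p ^ 2)) * h4'

theorem sum_neg_one_pow_mul_choose_mul_two_pow_mul_choose_cast {h : ℕ} (hh : 2 * h + 1 = p) :
    ∑ k ∈ Icc 1 (p - 1),
        ((-1) ^ (k + 1) * p.choose k * 2 ^ k * (3 * k + 1).choose k : ZMod (p ^ 2)) =
      2 * p * ((-1) ^ h - 1) := by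
  have hT := sum_choose_mul_neg_two_pow_mul_choose_three_mul_add_one ⟨h, hh.symm⟩
  have hT' := congrArg (Int.cast : ℤ → ZMod (p ^ 2)) hT
  push_cast at hT'
  rw [coeff_one_add_X_mul_X_add_two_pow_mul_pow_cast hh, sum_range_succ,
    sum_range_eq_add_Ico _ hp.out.pos, Nat.choose_mul_prime_add_one_self_cast 3] at hT'
  have hIcc : Icc 1 (p - 1) = Ico 1 p := by
    ext k
    simp only [mem_Icc, mem_Ico]
    omega
  have hsign : ∀ k ∈ Ico 1 p, (p.choose k : ZMod (p ^ 2)) * (-2) ^ k * (3 * k + 1).choose k =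
      -((-1) ^ (k + 1) * p.choose k * 2 ^ k * (3 * k + 1).choose k) := fun k _ => by
    rw [neg_pow]
    ring
  rw [sum_congr rfl hsign, sum_neg_distrib, ← hIcc] at hT'
  have h2p : (-2 : ZMod (p ^ 2)) ^ (2 * h + 1) = -(2 * 4 ^ h) := by
    rw [pow_succ (-2 : ZMod (p ^ 2)), pow_mul]
    ring
  have hfermat := Int.prime_dvd_four_pow_sub_one hh
  have hsq := ZMod.intCast_mul_eq_zero_of_dvd hfermat hfermat
  have hpe := ZMod.intCast_mul_eq_zero_of_dvd (dvd_refl (p : ℤ)) hfermat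
  push_cast at hsq hpe
  rw [hh] at h2p
  rw [h2p] at hT'
  simp only [Nat.choose_zero_right, Nat.choose_self, Nat.cast_one] at hT'
  -- with `e = 4 ^ h`, the two sides differ by `2 (e - 1)^2 + (2 (-1)^h - 4) p (e - 1)`
  linear_combination -hT' + 2 * hsq + (2 * (-1) ^ h - 4 : ZMod (p ^ 2)) * hpe

end Prime

theorem stmt_6 (p : ℕ) (hp : p.Prime) (hodd : Odd p) :
    (∑ k ∈ Finset.Icc 1 (p - 1),
        (2 : ZMod p) ^ k * ((3 * k + 1).choose k : ZMod p) * (k : ZMod p)⁻¹) =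
      2 * ((-1) ^ ((p - 1) / 2) - 1) := by
  have := Fact.mk hp
  obtain ⟨h, hh⟩ := hodd
  set N : ℤ := ∑ k ∈ Icc 1 (p - 1),
    (-1) ^ (k + 1) * (p.choose k / p : ℕ) * 2 ^ k * (3 * k + 1).choose k
  have hN : (p * N : ZMod (p ^ 2)) = p * (2 * ((-1) ^ h - 1) : ℤ) := by
    simp only [N, Int.cast_sum, Int.cast_mul, Int.cast_pow, Int.cast_neg, Int.cast_one,
      Int.cast_natCast, Int.cast_ofNat, Int.cast_sub, mul_sum]
    rw [mul_left_comm, ← mul_assoc,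
      ← sum_neg_one_pow_mul_choose_mul_two_pow_mul_choose_cast hh.symm]
    refine sum_congr rfl fun k hk => ?_
    have hq : (p.choose k : ZMod (p ^ 2)) = p * (p.choose k / p : ℕ) := by
      rw [← Nat.cast_mul, Nat.mul_div_cancel' (hp.dvd_choose_self (by grind) (by grind))]
    rw [hq]
    ring
  have hS : ∑ k ∈ Icc 1 (p - 1),
      (2 : ZMod p) ^ k * ((3 * k + 1).choose k : ZMod p) * (k : ZMod p)⁻¹ = N := by
    simp only [N, Int.cast_sum, Int.cast_mul, Int.cast_pow, Int.cast_neg, Int.cast_one,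
      Int.cast_natCast, Int.cast_ofNat]
    refine sum_congr rfl fun k hk => ?_
    rw [ZMod.inv_natCast_eq_neg_one_pow_mul_choose_div (by grind) (by grind)]
    ring
  rw [hS, (ZMod.natCast_mul_intCast_eq_iff hp.ne_zero).mp hN, show (p - 1) / 2 = h by omega]
  push_cast
  rfl
end

section
/- Let p be an odd prime. Then, in the field ℤ/pℤ, ∑_{k=1}^{p-1} 2^k · binom(3k+2, k) · k^{-1} = 3((-1)^{(p-1)/2} − 1), where k^{-1} denotes the inverse of k in ℤ/pℤ. -/
/-!
For `0 < k < p` one has `C(p, k) / p ≡ (-1)^(k-1) / k (mod p)`, so the sum is `-M (mod p)`, where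
`M = ∑ (C(p, k) / p) (-2)^k C(3k+2, k)` satisfies `p M = T - 1 - (-2)^p C(3p+2, p)` and
`T = ∑ C(p, k) (-2)^k C(3k+2, k)` is the coefficient of `x^p` in `(1+x)^2 (x - 2(1+x)^3)^p`.
Over `ℤ[i]` the cubic factors as `-(x+2)(1+(1+i)x)(1+(1-i)x)`; expanding the `p`-th power of each
linear factor as `a^p + b^p x^p + p·(…)` gives `T` modulo `p^2`, and in the same way
`C(3p+2, p) = [x^p] (1+x)^2 ((1+x)^p)^3`. In `p M` the terms not divisible by `p` cancel modulo
`p^2` because `D = (1+i)^p + (1-i)^p` satisfies `D^2 = 2^(p+1)` and `D ≡ 2^p ≡ 2 (mod p)`. What is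
left is evaluated modulo `p` with `(1 ± i)^p ≡ 1 ± (-1)^((p-1)/2) i`, and this is where the sign
`(-1)^((p-1)/2)` comes from.
-/

open Finset Polynomial

def chooseDivPrimeSum (p : ℕ) : ℤ :=
  ∑ k ∈ Ioo 0 p, (-2) ^ k * (3 * k + 2).choose k * (p.choose k / p : ℕ)

section ChooseModPrime

variable {p : ℕ} [hp : Fact p.Prime]

theorem natCast_choose_pred_eq_neg_one_pow {j : ℕ} (hj : j < p) :
    (((p - 1).choose j : ℕ) : ZMod p) = (-1) ^ j := by
  induction j with
  | zero => simp
  | succ j ih =>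
    have hpascal := Nat.choose_succ_succ' (p - 1) j
    rw [Nat.sub_add_cancel hp.out.one_le] at hpascal
    have hzero : ((p.choose (j + 1) : ℕ) : ZMod p) = 0 :=
      (ZMod.natCast_eq_zero_iff _ _).2 (hp.out.dvd_choose_self j.succ_ne_zero hj)
    rw [hpascal, Nat.cast_add, ih (by omega)] at hzero
    linear_combination hzero

theorem natCast_choose_div_self_mul {k : ℕ} (hk0 : 0 < k) (hkp : k < p) :
    ((p.choose k / p : ℕ) : ZMod p) * k = -(-1) ^ k := by
  obtain ⟨j, rfl⟩ : ∃ j, k = j + 1 := ⟨k - 1, by omega⟩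
  have hdiv : (j + 1) * (p.choose (j + 1) / p) = (p - 1).choose j := by
    apply Nat.eq_of_mul_eq_mul_left hp.out.pos
    have := Nat.add_one_mul_choose_eq (p - 1) j
    rw [Nat.sub_add_cancel hp.out.one_le] at this
    rw [mul_left_comm, Nat.mul_div_cancel' (hp.out.dvd_choose_self j.succ_ne_zero hkp), this,
      mul_comm]
  rw [← Nat.cast_mul, mul_comm, hdiv, natCast_choose_pred_eq_neg_one_pow (by omega), pow_succ]
  ring

theorem intCast_sum_mul_choose_div_self (f : ℕ → ℤ) :
    ((∑ k ∈ Ioo 0 p, f k * (p.choose k / p : ℕ) : ℤ) : ZMod p) =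
      -∑ k ∈ Ioo 0 p, (f k : ZMod p) * (-1) ^ k * (k : ZMod p)⁻¹ := by
  simp only [Int.cast_sum, Int.cast_mul, Int.cast_natCast, ← sum_neg_distrib]
  refine sum_congr rfl fun k hk ↦ ?_
  rw [mem_Ioo] at hk
  have hk0 : (k : ZMod p) ≠ 0 := by
    rw [Ne, ZMod.natCast_eq_zero_iff]
    exact fun h ↦ absurd (Nat.le_of_dvd hk.1 h) (by omega)
  rw [(eq_mul_inv_iff_mul_eq₀ hk0).2 (natCast_choose_div_self_mul hk.1 hk.2)]
  ring

theorem sum_two_pow_mul_choose_mul_inv_eq_neg :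
    ∑ k ∈ Ioo 0 p, (2 : ZMod p) ^ k * ((3 * k + 2).choose k : ZMod p) * (k : ZMod p)⁻¹ =
      -(chooseDivPrimeSum p : ZMod p) := by
  rw [chooseDivPrimeSum, intCast_sum_mul_choose_div_self, neg_neg]
  refine sum_congr rfl fun k _ ↦ ?_
  have hsign : (-2 : ZMod p) ^ k * (-1) ^ k = 2 ^ k := by rw [← mul_pow]; norm_num
  push_cast
  linear_combination (-((3 * k + 2).choose k : ZMod p) * (k : ZMod p)⁻¹) * hsign

end ChooseModPrime

section Coefficients

variable {A : Type*} [CommRing A]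

theorem coeff_one_add_X_pow_mul_C_mul_pow_mul_X_pow (m r : ℕ) (a : A) {n k : ℕ} (hk : k ≤ n) :
    ((1 + X) ^ m * (C a * (1 + X) ^ r) ^ k * X ^ (n - k)).coeff n =
      a ^ k * (r * k + m).choose k := by
  rw [mul_pow, ← C_pow, ← pow_mul, mul_left_comm, ← pow_add, coeff_mul_X_pow',
    if_pos (Nat.sub_le n k), Nat.sub_sub_self hk, coeff_C_mul, coeff_one_add_X_pow, add_comm m,
    mul_comm r]

theorem coeff_one_add_X_pow_mul_add_X_pow_prime {p : ℕ} (hp : p.Prime) (m r : ℕ) (a : A) :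
    ((1 + X) ^ m * (C a * (1 + X) ^ r + X) ^ p).coeff p =
      1 + a ^ p * (r * p + m).choose p +
        p * ∑ k ∈ Ioo 0 p, a ^ k * (r * k + m).choose k * (p.choose k / p : ℕ) := by
  have hterm (k : ℕ) (hk : k ≤ p) :=
    coeff_one_add_X_pow_mul_C_mul_pow_mul_X_pow m r a (n := p) hk
  rw [add_pow_prime_eq' hp, mul_add, mul_add, mul_left_comm, mul_sum, coeff_add, coeff_add,
    coeff_natCast_mul, finsetSum_coeff]
  have h0 := hterm 0 (Nat.zero_le p)
  have hp' := hterm p le_rfl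
  simp only [pow_zero, mul_one, Nat.sub_zero, Nat.sub_self, Nat.choose_zero_right,
    Nat.cast_one] at h0 hp'
  rw [h0, hp', add_comm (1 : A)]
  congr 2
  refine sum_congr rfl fun k hk ↦ ?_
  rw [← mul_assoc, coeff_mul_natCast, ← mul_assoc, hterm k (mem_Ioo.1 hk).2.le]

noncomputable def linearPowTail (p : ℕ) (c d : A) : A[X] :=
  ∑ k ∈ Ioo 0 p, C (d ^ k * c ^ (p - k) * (p.choose k / p : ℕ)) * X ^ k

theorem C_add_C_mul_X_pow_prime {p : ℕ} (hp : p.Prime) (c d : A) :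
    (C c + C d * X) ^ p = C (c ^ p) + C (d ^ p) * X ^ p + C (p : A) * linearPowTail p c d := by
  rw [add_comm, add_pow_prime_eq' hp, linearPowTail, mul_pow, ← C_pow, ← C_pow, map_natCast,
    add_comm (C (d ^ p) * _)]
  congr 2
  refine sum_congr rfl fun k _ ↦ ?_
  simp only [mul_pow, ← C_pow, C_mul, map_natCast]
  ring

theorem coeff_linearPowTail (p : ℕ) (c d : A) (j : ℕ) :
    (linearPowTail p c d).coeff j =
      if j ∈ Ioo 0 p then d ^ j * c ^ (p - j) * (p.choose j / p : ℕ) else 0 := by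
  simp only [linearPowTail, finsetSum_coeff, coeff_C_mul_X_pow]
  exact sum_ite_eq _ _ _

theorem coeff_one_add_X_sq_mul (f : A[X]) (n : ℕ) :
    ((1 + X) ^ 2 * f).coeff (n + 2) = f.coeff (n + 2) + 2 * f.coeff (n + 1) + f.coeff n := by
  have h : (1 + X) ^ 2 * f = f + 2 * (X * f) + X ^ 2 * f := by ring
  rw [h, coeff_add, coeff_add, coeff_ofNat_mul, coeff_X_mul, coeff_X_pow_mul]

theorem choose_pred_div_self {p : ℕ} (hp : 0 < p) : p.choose (p - 1) / p = 1 := by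
  rw [Nat.choose_symm hp, Nat.choose_one_right, Nat.div_self hp]

theorem choose_sub_two_div_self {p : ℕ} (hp : 2 ≤ p) : p.choose (p - 2) / p = (p - 1) / 2 := by
  rw [Nat.choose_symm hp, Nat.choose_two_right, Nat.div_div_eq_div_mul, mul_comm 2,
    Nat.mul_div_mul_left _ _ (by omega)]

theorem coeff_one_add_X_sq_mul_linearPowTail {p : ℕ} (hp : 3 ≤ p) (c d : A) :
    ((1 + X) ^ 2 * linearPowTail p c d).coeff p =
      2 * c * d ^ (p - 1) + ((p - 1) / 2 : ℕ) * c ^ 2 * d ^ (p - 2) := by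
  obtain ⟨n, rfl⟩ : ∃ n, p = n + 2 := ⟨p - 2, by omega⟩
  rw [coeff_one_add_X_sq_mul]
  simp only [coeff_linearPowTail, mem_Ioo]
  rw [if_neg (by omega), if_pos (by omega), if_pos (by omega)]
  have h1 := choose_pred_div_self (p := n + 2) (by omega)
  have h2 := choose_sub_two_div_self (p := n + 2) (by omega)
  simp only [Nat.add_sub_cancel, show n + 2 - 1 = n + 1 by omega, show n + 2 - (n + 1) = 1 by omega,
    show n + 2 - n = 2 by omega] at h1 h2 ⊢
  rw [h1, h2]
  push_cast
  ring

theorem coeff_mul_C_add_C_mul_X_pow (F : A[X]) (a b : A) (n : ℕ) :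
    (F * (C a + C b * X ^ n)).coeff n = a * F.coeff n + b * F.coeff 0 := by
  rw [mul_add, coeff_add, coeff_mul_C, ← mul_assoc, coeff_mul_X_pow', if_pos le_rfl,
    Nat.sub_self, coeff_mul_C, mul_comm, mul_comm (F.coeff 0)]

theorem coeff_zero_mul_C_add_C_mul_X_pow (F : A[X]) (a b : A) {n : ℕ} (hn : n ≠ 0) :
    (F * (C a + C b * X ^ n)).coeff 0 = a * F.coeff 0 := by
  rw [mul_coeff_zero, coeff_add, coeff_C_zero, coeff_C_mul, coeff_X_pow, if_neg hn.symm, mul_zero,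
    add_zero, mul_comm]

theorem sq_dvd_coeff_mul_prod_sub {n : ℕ} (hn : n ≠ 0) (Q R₁ R₂ R₃ : A[X])
    (hR₁ : R₁.coeff 0 = 0) (hR₂ : R₂.coeff 0 = 0) (hR₃ : R₃.coeff 0 = 0) (a₁ b₁ a₂ b₂ a₃ b₃ q : A) :
    q ^ 2 ∣ (Q * ((C a₁ + C b₁ * X ^ n + C q * R₁) * (C a₂ + C b₂ * X ^ n + C q * R₂) *
        (C a₃ + C b₃ * X ^ n + C q * R₃))).coeff n -
      (Q.coeff n * (a₁ * a₂ * a₃) + Q.coeff 0 * (b₁ * a₂ * a₃ + a₁ * b₂ * a₃ + a₁ * a₂ * b₃) +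
        q * (a₂ * a₃ * (Q * R₁).coeff n + a₁ * a₃ * (Q * R₂).coeff n +
          a₁ * a₂ * (Q * R₃).coeff n)) := by
  set M₁ := C a₁ + C b₁ * X ^ n
  set M₂ := C a₂ + C b₂ * X ^ n
  set M₃ := C a₃ + C b₃ * X ^ n
  have hexpand : Q * ((M₁ + C q * R₁) * (M₂ + C q * R₂) * (M₃ + C q * R₃)) =
      Q * M₁ * M₂ * M₃ + C q * (Q * R₁ * M₂ * M₃ + Q * R₂ * M₁ * M₃ + Q * R₃ * M₁ * M₂) +
        C (q ^ 2) * (Q * (R₁ * R₂ * M₃ + R₁ * M₂ * R₃ + M₁ * R₂ * R₃ + C q * R₁ * R₂ * R₃)) := by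
    rw [C_pow]; ring
  have hQR (R : A[X]) (hR : R.coeff 0 = 0) : (Q * R).coeff 0 = 0 := by
    rw [mul_coeff_zero, hR, mul_zero]
  rw [hexpand, coeff_add, coeff_add, coeff_C_mul, coeff_C_mul]
  generalize (Q * (R₁ * R₂ * M₃ + R₁ * M₂ * R₃ + M₁ * R₂ * R₃ + C q * R₁ * R₂ * R₃)).coeff n = e
  simp only [coeff_add, coeff_mul_C_add_C_mul_X_pow,
    coeff_zero_mul_C_add_C_mul_X_pow _ _ _ hn, hQR R₁ hR₁, hQR R₂ hR₂, hQR R₃ hR₃, M₁, M₂, M₃]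
  exact ⟨e, by ring⟩

theorem sq_dvd_coeff_one_add_X_sq_mul_linear_pow_sub {p : ℕ} (hp : p.Prime) (hp3 : 3 ≤ p)
    (c₁ d₁ c₂ d₂ c₃ d₃ : A) :
    (p : A) ^ 2 ∣ ((1 + X) ^ 2 *
        ((C c₁ + C d₁ * X) ^ p * (C c₂ + C d₂ * X) ^ p * (C c₃ + C d₃ * X) ^ p)).coeff p -
      (d₁ ^ p * c₂ ^ p * c₃ ^ p + c₁ ^ p * d₂ ^ p * c₃ ^ p + c₁ ^ p * c₂ ^ p * d₃ ^ p +
        p * (c₂ ^ p * c₃ ^ p * ((1 + X) ^ 2 * linearPowTail p c₁ d₁).coeff p +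
          c₁ ^ p * c₃ ^ p * ((1 + X) ^ 2 * linearPowTail p c₂ d₂).coeff p +
          c₁ ^ p * c₂ ^ p * ((1 + X) ^ 2 * linearPowTail p c₃ d₃).coeff p)) := by
  have htail (c d : A) : (linearPowTail p c d).coeff 0 = 0 := by
    rw [coeff_linearPowTail, if_neg (by simp)]
  have hQ : ((1 + X) ^ 2 : A[X]).coeff p = 0 := by
    rw [coeff_one_add_X_pow, Nat.choose_eq_zero_of_lt (by omega), Nat.cast_zero]
  have h := sq_dvd_coeff_mul_prod_sub hp.ne_zero ((1 + X) ^ 2) _ _ _ (htail c₁ d₁) (htail c₂ d₂)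
    (htail c₃ d₃) (c₁ ^ p) (d₁ ^ p) (c₂ ^ p) (d₂ ^ p) (c₃ ^ p) (d₃ ^ p) p
  rw [hQ, coeff_one_add_X_pow, Nat.choose_zero_right] at h
  simp only [C_add_C_mul_X_pow_prime hp]
  convert h using 2
  ring

theorem sq_dvd_choose_three_mul_add_two_sub {p : ℕ} (hp : p.Prime) (hp3 : 3 ≤ p) :
    (p : A) ^ 2 ∣ ((3 * p + 2).choose p : A) - (3 + 3 * p * (2 + ((p - 1) / 2 : ℕ))) := by
  have h := sq_dvd_coeff_one_add_X_sq_mul_linear_pow_sub hp hp3 (1 : A) 1 1 1 1 1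
  have hpow : ((1 + X) ^ 2 * ((C 1 + C 1 * X) ^ p * (C 1 + C 1 * X) ^ p * (C 1 + C 1 * X) ^ p) :
      A[X]) = (1 + X) ^ (3 * p + 2) := by
    rw [C_1, one_mul]; ring
  rw [hpow, coeff_one_add_X_pow, coeff_one_add_X_sq_mul_linearPowTail hp3] at h
  convert h using 2
  simp only [one_pow, mul_one]
  ring

end Coefficients

section GaussianRing

variable {A : Type*} [CommRing A] {i : A}

theorem cubic_eq_neg_prod_linear (hi : i ^ 2 = -1) :
    (C (-2) * (1 + X) ^ 3 + X : A[X]) =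
      -((C 2 + C 1 * X) * (C 1 + C (1 + i) * X) * (C 1 + C (1 - i) * X)) := by
  have hCi : (C i) ^ 2 = -1 := by rw [← C_pow, hi, C_neg, C_1]
  simp only [C_add, C_sub, C_1, C_neg, C_ofNat]
  linear_combination (-(X ^ 2 * (X + 2))) * hCi

theorem sq_dvd_coeff_one_add_X_sq_mul_cubic_pow_add {p : ℕ} (hp : p.Prime) (hp3 : 3 ≤ p)
    (hi : i ^ 2 = -1) :
    (p : A) ^ 2 ∣ ((1 + X) ^ 2 * (C (-2) * (1 + X) ^ 3 + X) ^ p : A[X]).coeff p +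
      (1 + 2 ^ p * ((1 + i) ^ p + (1 - i) ^ p) +
        p * (4 + 4 * ((p - 1) / 2 : ℕ) +
          2 ^ p * (2 * (1 + i) ^ (p - 1) + ((p - 1) / 2 : ℕ) * (1 + i) ^ (p - 2) +
            (2 * (1 - i) ^ (p - 1) + ((p - 1) / 2 : ℕ) * (1 - i) ^ (p - 2))))) := by
  have h := sq_dvd_coeff_one_add_X_sq_mul_linear_pow_sub hp hp3 (2 : A) 1 1 (1 + i) 1 (1 - i)
  simp only [coeff_one_add_X_sq_mul_linearPowTail hp3, one_pow, mul_one, one_mul] at h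
  rw [cubic_eq_neg_prod_linear hi, (hp.odd_of_ne_two (by omega)).neg_pow, mul_pow, mul_pow,
    mul_neg, coeff_neg]
  convert (dvd_neg.2 h) using 1
  ring

theorem one_add_pow_mul_one_sub_pow (hi : i ^ 2 = -1) (n : ℕ) :
    (1 + i) ^ n * (1 - i) ^ n = 2 ^ n := by
  rw [← mul_pow]; congr 1; linear_combination -hi

theorem one_add_pow_mul_one_add_pow (hi : i ^ 2 = -1) (m : ℕ) :
    (1 + i) ^ (2 * m + 3) * (1 + i) ^ (2 * m + 1) = 2 ^ (2 * m + 2) * (-1) ^ (m + 1) := by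
  rw [← pow_add, show 2 * m + 3 + (2 * m + 1) = 2 * (2 * (m + 1)) by ring, pow_mul, pow_mul,
    show (1 + i) ^ 2 = 2 * i by linear_combination hi, mul_pow, mul_pow, hi, ← pow_mul]
  ring

theorem exists_one_add_pow_prime_eq {p : ℕ} (hp : p.Prime) (hp2 : p ≠ 2) (hi : i ^ 2 = -1) :
    ∃ r, (1 + i) ^ p = 1 + (-1) ^ ((p - 1) / 2) * i + p * r := by
  obtain ⟨r, hr⟩ := exists_add_pow_prime_eq hp 1 i
  have hipow : i ^ p = (-1) ^ ((p - 1) / 2) * i := by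
    obtain ⟨k, hk⟩ := hp.odd_of_ne_two hp2
    rw [hk, show (2 * k + 1 - 1) / 2 = k by omega, pow_succ, pow_mul, hi]
  exact ⟨i * r, by rw [hr, one_pow, hipow]; ring⟩

theorem sq_dvd_two_mul_main_term {p : ℕ} (hp : p.Prime) (hp2 : p ≠ 2) (hi : i ^ 2 = -1) :
    (p : A) ^ 2 ∣ 2 * (3 * 2 ^ p - 2 - 2 ^ p * ((1 + i) ^ p + (1 - i) ^ p)) := by
  obtain ⟨r, hr⟩ := exists_add_pow_prime_eq hp (1 + i) (1 - i)
  obtain ⟨s, hs⟩ := exists_add_pow_prime_eq hp (1 : A) 1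
  have hprod := one_add_pow_mul_one_sub_pow hi p
  have hsq : ((1 + i) ^ p) ^ 2 + ((1 - i) ^ p) ^ 2 = 0 := by
    rw [← pow_mul, ← pow_mul, mul_comm p 2, pow_mul, pow_mul,
      show (1 + i) ^ 2 = 2 * i by linear_combination hi,
      show (1 - i) ^ 2 = -(2 * i) by linear_combination hi,
      (hp.odd_of_ne_two hp2).neg_pow, add_neg_cancel]
  rw [show (1 + i) + (1 - i) = (2 : A) by ring, mul_assoc, mul_assoc] at hr
  rw [one_pow, one_add_one_eq_two, mul_one, mul_one] at hs
  set U := (1 + i) ^ p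
  set V := (1 - i) ^ p
  set t := (1 + i) * ((1 - i) * r)
  exact ⟨t ^ 2 - s ^ 2, by
    linear_combination -(hsq + 2 * hprod) - (2 ^ p - 2 + p * s) * hs - (U + V - 2 ^ p - p * t) * hr⟩

theorem dvd_two_pow_mul_one_add_pow_sub_two_sub {p : ℕ} (hp : p.Prime) (hp2 : p ≠ 2)
    (hi : i ^ 2 = -1) :
    (p : A) ∣ 2 ^ p * (1 + i) ^ (p - 2) - ((-1) ^ ((p - 1) / 2) - i) := by
  obtain ⟨m, hm⟩ : ∃ m, p = 2 * m + 3 := by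
    obtain ⟨k, hk⟩ := hp.odd_of_ne_two hp2
    exact ⟨k - 1, by have := hp.two_le; omega⟩
  obtain ⟨r, hV⟩ := exists_one_add_pow_prime_eq hp hp2 (i := -i) (by rw [neg_sq, hi])
  obtain ⟨s, hs⟩ := exists_add_pow_prime_eq hp (1 : A) 1
  have hprod := one_add_pow_mul_one_sub_pow hi p
  have hUY := one_add_pow_mul_one_add_pow hi m
  have hσ : ((-1 : A) ^ (m + 1)) ^ 2 = 1 := by rw [← pow_mul, pow_mul', neg_one_sq, one_pow]
  have hW : (2 : A) ^ p = 2 * 2 ^ (2 * m + 2) := by rw [hm]; ring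
  have hpm : (p : A) = 2 * m + 3 := by rw [hm]; push_cast; ring
  rw [show (p - 1) / 2 = m + 1 by omega, ← sub_eq_add_neg] at hV
  rw [show (p - 1) / 2 = m + 1 by omega, show p - 2 = 2 * m + 1 by omega]
  rw [← hm] at hUY
  rw [one_pow, one_add_one_eq_two, mul_one, mul_one] at hs
  set σ : A := (-1) ^ (m + 1)
  set H : A := 2 ^ (2 * m + 2)
  set V := (1 - i) ^ p
  set Y := (1 + i) ^ (2 * m + 1)
  -- `2^p (1+i)^(p-2) = (1-i)^p (2i)^(p-1)`, with `(1-i)^p ≡ 1 - σ i` and `2^(p-1) ≡ 1 (mod p)`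
  exact ⟨(σ - i) * ((m + 2) * s - (H - 1)) + r * H * σ, by
    linear_combination -Y * hprod + V * hUY + H * σ * hV - H * i * hσ + (H - 1) * (σ - i) * hpm -
      (m + 2) * (σ - i) * (hW - hs)⟩

theorem dvd_cross_term_sub {p : ℕ} (hp : p.Prime) (hp2 : p ≠ 2) (hi : i ^ 2 = -1) :
    (p : A) ∣ 3 * 2 ^ p * (2 + ((p - 1) / 2 : ℕ)) -
      (4 + 4 * ((p - 1) / 2 : ℕ) +
        2 ^ p * (2 * (1 + i) ^ (p - 1) + ((p - 1) / 2 : ℕ) * (1 + i) ^ (p - 2) +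
          (2 * (1 - i) ^ (p - 1) + ((p - 1) / 2 : ℕ) * (1 - i) ^ (p - 2)))) -
      (3 - 3 * (-1) ^ ((p - 1) / 2)) := by
  obtain ⟨a, ha⟩ := dvd_two_pow_mul_one_add_pow_sub_two_sub hp hp2 hi
  obtain ⟨b, hb⟩ := dvd_two_pow_mul_one_add_pow_sub_two_sub hp hp2 (i := -i) (by rw [neg_sq, hi])
  obtain ⟨s, hs⟩ := exists_add_pow_prime_eq hp (1 : A) 1
  rw [one_pow, one_add_one_eq_two, mul_one, mul_one] at hs
  rw [← sub_eq_add_neg, sub_neg_eq_add] at hb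
  have hh : (2 * ((p - 1) / 2 : ℕ) + 1 : A) = p := by
    obtain ⟨k, hk⟩ := hp.odd_of_ne_two hp2
    rw [hk, show (2 * k + 1 - 1) / 2 = k by omega]; push_cast; ring
  set h : A := (((p - 1) / 2 : ℕ) : A)
  set σ : A := (-1) ^ ((p - 1) / 2)
  rw [show p - 1 = p - 2 + 1 by have := hp.two_le; omega, pow_succ', pow_succ']
  exact ⟨-(2 * (1 + i) + h) * a - (2 * (1 - i) + h) * b + 3 * (2 + h) * s + (1 - σ), by
    linear_combination -(2 * (1 + i) + h) * ha - (2 * (1 - i) + h) * hb + 3 * (2 + h) * hs +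
      (1 - σ) * hh + 4 * hi⟩

end GaussianRing

theorem dvd_two_mul_chooseDivPrimeSum_sub {p : ℕ} (hp : p.Prime) (hp2 : p ≠ 2) :
    (p : ℤ) ∣ 2 * chooseDivPrimeSum p - 2 * (3 - 3 * (-1) ^ ((p - 1) / 2)) := by
  have hp3 : 3 ≤ p := by have := hp.two_le; omega
  have hi : (Zsqrtd.sqrtd : GaussianInt) ^ 2 = -1 := by rw [sq, Zsqrtd.dmuld]; rfl
  have hM := coeff_one_add_X_pow_mul_add_X_pow_prime (A := GaussianInt) hp 2 3 (-2)
  obtain ⟨e₁, he₁⟩ := sq_dvd_coeff_one_add_X_sq_mul_cubic_pow_add hp hp3 hi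
  obtain ⟨e₂, he₂⟩ := sq_dvd_choose_three_mul_add_two_sub (A := GaussianInt) hp hp3
  obtain ⟨e₃, he₃⟩ := sq_dvd_two_mul_main_term hp hp2 hi
  obtain ⟨e₄, he₄⟩ := dvd_cross_term_sub hp hp2 hi
  have hcast : ((chooseDivPrimeSum p : ℤ) : GaussianInt) =
      ∑ k ∈ Ioo 0 p, (-2) ^ k * ((3 * k + 2).choose k : GaussianInt) * (p.choose k / p : ℕ) := by
    simp only [chooseDivPrimeSum, Int.cast_sum, Int.cast_mul, Int.cast_pow, Int.cast_neg,
      Int.cast_ofNat, Int.cast_natCast]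
  rw [(hp.odd_of_ne_two hp2).neg_pow, ← hcast] at hM
  have hp0 : (p : GaussianInt) ≠ 0 := Nat.cast_ne_zero.2 hp.ne_zero
  rw [← Zsqrtd.intCast_dvd_intCast (d := -1)]
  refine ⟨e₃ + 2 * e₄ + 2 * e₁ + 2 * 2 ^ p * e₂, mul_left_cancel₀ hp0 ?_⟩
  push_cast
  linear_combination -2 * hM + 2 * he₁ + 2 * 2 ^ p * he₂ + he₃ + 2 * p * he₄

theorem intCast_chooseDivPrimeSum {p : ℕ} [Fact p.Prime] (hp2 : p ≠ 2) :
    (chooseDivPrimeSum p : ZMod p) = 3 - 3 * (-1) ^ ((p - 1) / 2) := by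
  have htwo : (2 : ZMod p) ≠ 0 := Ring.two_ne_zero (by rwa [ZMod.ringChar_zmod_n])
  have h := (ZMod.intCast_zmod_eq_zero_iff_dvd _ p).2
    (dvd_two_mul_chooseDivPrimeSum_sub Fact.out hp2)
  push_cast at h
  exact mul_left_cancel₀ htwo (by linear_combination h)

theorem stmt_7 (p : ℕ) (hp : p.Prime) (hodd : Odd p) :
    (∑ k ∈ Finset.Icc 1 (p - 1),
        (2 : ZMod p) ^ k * ((3 * k + 2).choose k : ZMod p) * (k : ZMod p)⁻¹) =
      3 * ((-1) ^ ((p - 1) / 2) - 1) := by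
  have := Fact.mk hp
  have hp2 : p ≠ 2 := by rintro rfl; exact absurd hodd (by decide)
  rw [show Icc 1 (p - 1) = Ioo 0 p by ext k; simp; omega, sum_two_pow_mul_choose_mul_inv_eq_neg,
    intCast_chooseDivPrimeSum hp2]
  ring
end

section
/- For all m, n ∈ ℕ, the following identity holds in ℤ: 2^n · ∑_{k=0}^{⌊m/3⌋} (-2)^k · binom(n, m−3k) · binom(3k−m+n, k) = (-1)^m · ∑_{j=0}^{n} binom(n, j) · ∑_{k=0}^{m} (-2)^k · binom(n, m−k) · binom(2j, k). -/
/-!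
Both sides equal `2 ^ n` times the coefficient of `X ^ m` in `(1 + X - 2X³) ^ n`. On the left this
is the trinomial expansion: choose the `m - 3k` factors contributing `X`, then `k` of the remaining
ones contributing `-2X³`. On the right, the inner sum is the coefficient of `X ^ m` in
`(1 - 2X) ^ (2j) (1 + X) ^ n`, the binomial theorem sums the `j`-series to
`((1 - 2X)² + 1) ^ n (1 + X) ^ n`, and `((1 - 2X)² + 1)(1 + X) = 2 (1 - X + 2X³)`; the
substitution `X ↦ -X` relating this polynomial to `1 + X - 2X³` produces the sign `(-1) ^ m`.
-/

open Polynomial Finset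

theorem Nat.choose_mul_choose_sub_comm (n k s : ℕ) :
    n.choose k * (n - k).choose s = n.choose s * (n - s).choose k := by
  have hk := Nat.choose_mul (n := n) (Nat.le_add_right k s)
  have hs := Nat.choose_mul (n := n) (Nat.le_add_left s k)
  rw [Nat.add_sub_cancel_left] at hk
  rw [Nat.add_sub_cancel] at hs
  rw [← hk, ← hs, Nat.choose_symm_add]

theorem Finset.sum_range_eq_sum_range_of_eq_zero {M : Type*} [AddCommMonoid M] {f : ℕ → M}
    {a b : ℕ} (hf : ∀ k, min a b ≤ k → f k = 0) :
    ∑ k ∈ range a, f k = ∑ k ∈ range b, f k := by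
  wlog hab : a ≤ b generalizing a b
  · exact (this (by rwa [min_comm]) (by omega)).symm
  exact sum_subset (range_subset_range.2 hab) fun k _ hk ↦ hf k (by rw [mem_range] at hk; omega)

namespace Polynomial

variable {R : Type*} [CommSemiring R]

theorem coeff_one_add_C_mul_X_pow (a : R) (j i : ℕ) :
    ((1 + C a * X) ^ j).coeff i = a ^ i * j.choose i := by
  have : (1 + C a * X) ^ j = ((1 + X) ^ j).comp (C a * X) := by simp
  rw [this, comp_C_mul_X_coeff, coeff_one_add_X_pow, mul_comm]

theorem coeff_one_add_X_add_C_mul_X_pow_three_pow (c : R) (m n : ℕ) :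
    ((1 + X + C c * X ^ 3) ^ n).coeff m =
      ∑ k ∈ range (m / 3 + 1), c ^ k * n.choose (m - 3 * k) * (n + 3 * k - m).choose k := by
  have hterm (k : ℕ) : ((C c * X ^ 3) ^ k * (1 + X) ^ (n - k) * (n.choose k : R[X])).coeff m =
      if 3 * k ≤ m then c ^ k * n.choose k * (n - k).choose (m - 3 * k) else 0 := by
    have : (C c * X ^ 3) ^ k * (1 + X) ^ (n - k) * (n.choose k : R[X]) =
        C (c ^ k * n.choose k) * ((1 + X) ^ (n - k) * X ^ (3 * k)) := by
      rw [C_mul, C_pow, ← C_eq_natCast]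
      ring
    rw [this, coeff_C_mul, coeff_mul_X_pow', coeff_one_add_X_pow]
    split_ifs <;> ring
  rw [add_comm, add_pow, finsetSum_coeff]
  simp_rw [hterm]
  rw [sum_range_eq_sum_range_of_eq_zero (b := m / 3 + 1)]
  · refine sum_congr rfl fun k hk ↦ ?_
    have h3k : 3 * k ≤ m := by rw [mem_range] at hk; omega
    rw [if_pos h3k, mul_assoc, ← Nat.cast_mul, Nat.choose_mul_choose_sub_comm,
      Nat.cast_mul, ← mul_assoc]
    rcases le_or_gt (m - 3 * k) n with h | h
    · rw [show n - (m - 3 * k) = n + 3 * k - m by omega]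
    · simp [Nat.choose_eq_zero_of_lt h]
  · intro k hk
    rcases le_or_gt k n with h | h
    · rw [if_neg (by omega)]
    · simp [Nat.choose_eq_zero_of_lt h]

theorem sum_choose_mul_coeff_pow_mul (p q : R[X]) (n m : ℕ) :
    ∑ j ∈ range (n + 1), (n.choose j : R) * (p ^ j * q).coeff m = ((p + 1) ^ n * q).coeff m := by
  rw [add_pow, sum_mul, finsetSum_coeff]
  refine sum_congr rfl fun j _ ↦ ?_
  rw [one_pow, mul_one, mul_right_comm, coeff_mul_natCast, mul_comm]

end Polynomial

theorem stmt_8 (m n : ℕ) :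
    (2 : ℤ) ^ n *
        ∑ k ∈ Finset.range (m / 3 + 1),
          (-2 : ℤ) ^ k * (n.choose (m - 3 * k) : ℤ) * ((n + 3 * k - m).choose k : ℤ) =
      (-1) ^ m *
        ∑ j ∈ Finset.range (n + 1),
          (n.choose j : ℤ) *
            ∑ k ∈ Finset.range (m + 1),
              (-2 : ℤ) ^ k * (n.choose (m - k) : ℤ) * ((2 * j).choose k : ℤ) := by
  set Q : ℤ[X] := 1 + X + C (-2) * X ^ 3
  have hinner (j : ℕ) : ∑ k ∈ range (m + 1), (-2 : ℤ) ^ k * n.choose (m - k) * (2 * j).choose k =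
      (((1 + C (-2) * X) ^ 2) ^ j * (1 + X) ^ n).coeff m := by
    rw [← pow_mul, coeff_mul, Nat.sum_antidiagonal_eq_sum_range_succ_mk]
    refine sum_congr rfl fun k _ ↦ ?_
    rw [coeff_one_add_C_mul_X_pow, coeff_one_add_X_pow, mul_right_comm]
  have hfactor : ((1 + C (-2) * X) ^ 2 + 1) ^ n * (1 + X) ^ n =
      C (2 ^ n) * (Q ^ n).comp (C (-1) * X) := by
    rw [pow_comp, ← mul_pow, C_pow, ← mul_pow]
    congr 1
    simp only [Q, add_comp, mul_comp, pow_comp, one_comp, X_comp, neg_comp, ofNat_comp, map_neg,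
      map_one, map_ofNat]
    ring
  simp_rw [hinner]
  rw [sum_choose_mul_coeff_pow_mul, hfactor, coeff_C_mul, comp_C_mul_X_coeff,
    coeff_one_add_X_add_C_mul_X_pow_three_pow, mul_left_comm,
    mul_comm _ ((-1) ^ m), ← mul_assoc ((-1) ^ m), ← mul_pow]
  norm_num
end

section
/- Let p > 5 be a prime. Then 5 · ∑_{s=0}^{p-1} (-1)^s · ∑_{t=0}^{p-1} 2^t · binom(2s, t) ≡ 3·(-1)^{(p-1)/2} + 2 (mod p). -/
/-! Modulo `p`, Lucas' theorem reduces the inner sum to a truncated binomial expansion: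
`∑_{t<p} 2^t C(n, t) ≡ 3^(n mod p)`. Since `3^p ≡ 3`, the `s`-th term of the outer sum is
`(-9)^s` for `2s < p` and `(-9)^s / 3` for `2s > p`. With `p = 2m + 1`, Fermat's little theorem in
the form `(-9)^m = (-1)^m 3^(p-1) ≡ (-1)^m` evaluates the partial geometric sum up to `m`,
while `(-9)^p ≡ -9` makes the full geometric sum `∑_{s<p} (-9)^s` equal to `1`. -/

open Finset

theorem geom_sum_eq_one_of_pow_eq_self {R : Type*} [CommRing R] [IsDomain R] {x : R} {n : ℕ}
    (hx : x ≠ 1) (hxn : x ^ n = x) : ∑ i ∈ range n, x ^ i = 1 := by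
  refine mul_right_cancel₀ (sub_ne_zero.2 hx) ?_
  rw [geom_sum_mul, hxn, one_mul]

namespace ZMod

variable {p : ℕ} [Fact p.Prime]

theorem natCast_ne_zero_of_pos_of_lt {n : ℕ} (h0 : 0 < n) (hn : n < p) : (n : ZMod p) ≠ 0 := by
  rw [Ne, natCast_eq_zero_iff]
  exact fun h => (Nat.le_of_dvd h0 h).not_gt hn

theorem natCast_choose_eq_choose_mod {t : ℕ} (ht : t < p) (n : ℕ) :
    (n.choose t : ZMod p) = ((n % p).choose t : ZMod p) := by
  have h := (natCast_eq_natCast_iff _ _ _).2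
    (Choose.choose_modEq_choose_mod_mul_choose_div_nat (n := n) (k := t) (p := p))
  rwa [Nat.mod_eq_of_lt ht, Nat.div_eq_of_lt ht, Nat.choose_zero_right, mul_one] at h

theorem sum_range_pow_mul_choose (a : ZMod p) (n : ℕ) :
    ∑ t ∈ range p, a ^ t * (n.choose t : ZMod p) = (a + 1) ^ (n % p) := by
  have hsub : range (n % p + 1) ⊆ range p :=
    range_subset_range.2 (Nat.mod_lt n (Fact.out : p.Prime).pos)
  rw [sum_congr rfl fun t ht => by rw [natCast_choose_eq_choose_mod (mem_range.1 ht)],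
    ← sum_subset hsub fun t _ ht => ?_, add_pow]
  · simp only [one_pow, mul_one]
  · rw [Nat.choose_eq_zero_of_lt (by simpa using ht), Nat.cast_zero, mul_zero]

theorem pow_mod_mul_pow_div (a : ZMod p) (n : ℕ) : a ^ (n % p) * a ^ (n / p) = a ^ n := by
  conv_rhs => rw [← Nat.mod_add_div n p, pow_add, pow_mul, pow_card]

theorem mul_pow_mod_of_le_of_lt_two_mul (a : ZMod p) {n : ℕ} (h1 : p ≤ n) (h2 : n < 2 * p) :
    a * a ^ (n % p) = a ^ n := by
  rw [← pow_mod_mul_pow_div a n, Nat.div_eq_of_lt_le (k := 1) (by omega) (by omega), pow_one,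
    mul_comm]

theorem neg_sq_pow_eq_neg_one_pow {a : ZMod p} (ha : a ≠ 0) {m : ℕ} (hm : p = 2 * m + 1) :
    (-a ^ 2) ^ m = (-1) ^ m := by
  rw [neg_eq_neg_one_mul, mul_pow, ← pow_mul, show 2 * m = p - 1 by omega,
    pow_card_sub_one_eq_one ha, mul_one]

end ZMod

theorem stmt_9 (p : ℕ) (hp : p.Prime) (h5 : 5 < p) :
    (5 * ∑ s ∈ Finset.range p,
        (-1 : ℤ) ^ s * ∑ t ∈ Finset.range p, 2 ^ t * ((2 * s).choose t : ℤ)) ≡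
      3 * (-1) ^ ((p - 1) / 2) + 2 [ZMOD (p : ℤ)] := by
  have := Fact.mk hp
  obtain ⟨m, hm⟩ : ∃ m, p = 2 * m + 1 := hp.odd_of_ne_two (by omega)
  rw [← ZMod.intCast_eq_intCast_iff, show (p - 1) / 2 = m by omega]
  push_cast
  simp only [ZMod.sum_range_pow_mul_choose, show (2 : ZMod p) + 1 = 3 by norm_num]
  have hne : ∀ n : ℕ, 0 < n → n < p → (n : ZMod p) ≠ 0 :=
    fun _ => ZMod.natCast_ne_zero_of_pos_of_lt
  have h2 : (2 : ZMod p) ≠ 0 := by exact_mod_cast hne 2 (by norm_num) (by omega)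
  have h3 : (3 : ZMod p) ≠ 0 := by exact_mod_cast hne 3 (by norm_num) (by omega)
  have h5' : (5 : ZMod p) ≠ 0 := by exact_mod_cast hne 5 (by norm_num) (by omega)
  have hlow : ∀ s ∈ range (m + 1), (-1 : ZMod p) ^ s * 3 ^ (2 * s % p) = (-9) ^ s := by
    intro s hs
    rw [Nat.mod_eq_of_lt (by simp at hs; omega), pow_mul, ← mul_pow]
    norm_num
  have hhigh : 3 * ∑ s ∈ Ico (m + 1) p, (-1 : ZMod p) ^ s * 3 ^ (2 * s % p) =
      ∑ s ∈ Ico (m + 1) p, (-9) ^ s := by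
    refine (mul_sum _ _ _).trans (sum_congr rfl fun s hs => ?_)
    rw [mem_Ico] at hs
    rw [mul_left_comm, ZMod.mul_pow_mod_of_le_of_lt_two_mul _ (by omega) (by omega), pow_mul,
      ← mul_pow]
    norm_num
  have hhalf : (∑ s ∈ range (m + 1), (-9 : ZMod p) ^ s) * (-9 - 1) = -9 * (-1) ^ m - 1 := by
    rw [geom_sum_mul, pow_succ, show (-9 : ZMod p) = -3 ^ 2 by norm_num,
      ZMod.neg_sq_pow_eq_neg_one_pow h3 hm, mul_comm]
  have hfull : ∑ s ∈ range p, (-9 : ZMod p) ^ s = 1 :=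
    geom_sum_eq_one_of_pow_eq_self (fun h => mul_ne_zero h2 h5' (by linear_combination -h))
      (ZMod.pow_card _)
  rw [← sum_range_add_sum_Ico _ (by omega : m + 1 ≤ p)] at hfull ⊢
  rw [sum_congr rfl hlow]
  refine mul_left_cancel₀ (mul_ne_zero h2 h3) ?_
  linear_combination 10 * hhigh + 10 * hfull - 2 * hhalf
end

section
/- Let p > 5 be a prime. Then 10 · ∑_{s=0}^{p-1} (-1)^s · ∑_{t=0}^{p-1} 2^t · binom(2s, p+t) ≡ 3(1 − (-1)^{(p-1)/2}) (mod p). -/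
/-!
Write `p = 2m + 1`. For `s ≤ m` we have `2s < p`, so every `binom(2s, p + t)` vanishes. For
`s = m + 1 + u` with `u < m` we have `2s = p + (2u + 1)`, and Lucas' theorem gives
`binom(p + n, p + t) ≡ binom(n, t)`, so the inner sum is `(2 + 1)^(2u+1)` by the binomial theorem.
The outer sum becomes `-3 (-1)^m ∑_{u<m} (-9)^u`, a geometric sum with
`10 ∑ (-9)^u = 1 - (-9)^m`, and `(-9)^m = (-1)^m 3^(p-1) = (-1)^m` by Fermat.
-/

open Finset

theorem Choose.choose_prime_add_prime_add_modEq {p n k : ℕ} [Fact p.Prime] (hn : n < p)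
    (hk : k < p) : (p + n).choose (p + k) ≡ n.choose k [ZMOD p] := by
  have hp := (Fact.out : p.Prime).pos
  simpa [Nat.add_mod_left, Nat.mod_eq_of_lt, Nat.add_div_left, Nat.div_eq_of_lt, hn, hk, hp]
    using Choose.choose_modEq_choose_mod_mul_choose_div (p := p) (n := p + n) (k := p + k)

theorem sum_range_pow_mul_choose_of_lt {R : Type*} [CommSemiring R] (x : R) {n N : ℕ}
    (h : n < N) : ∑ t ∈ range N, x ^ t * n.choose t = (x + 1) ^ n := by
  rw [add_pow, ← sum_subset (range_subset_range.mpr h)]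
  · simp
  · intro t _ ht
    rw [Nat.choose_eq_zero_of_lt (by simpa using ht), Nat.cast_zero, mul_zero]

theorem ZMod.sum_range_pow_mul_choose_prime_add {p n : ℕ} [Fact p.Prime] (x : ZMod p)
    (hn : n < p) : ∑ t ∈ range p, x ^ t * ((p + n).choose (p + t) : ZMod p) = (x + 1) ^ n := by
  rw [← sum_range_pow_mul_choose_of_lt x hn]
  refine sum_congr rfl fun t ht ↦ ?_
  have hlucas := Choose.choose_prime_add_prime_add_modEq hn (mem_range.mp ht)
  rw [← ZMod.intCast_eq_intCast_iff] at hlucas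
  exact_mod_cast congrArg (x ^ t * ·) hlucas

theorem ZMod.sum_neg_one_pow_mul_sum_two_pow_mul_choose {p m : ℕ} [Fact p.Prime]
    (hm : p = 2 * m + 1) :
    ∑ s ∈ range p,
        (-1 : ZMod p) ^ s * ∑ t ∈ range p, 2 ^ t * ((2 * s).choose (p + t) : ZMod p) =
      -3 * (-1) ^ m * ∑ u ∈ range m, (-9) ^ u := by
  have hvanish : ∀ s ∈ range (m + 1),
      (-1 : ZMod p) ^ s * ∑ t ∈ range p, 2 ^ t * ((2 * s).choose (p + t) : ZMod p) = 0 := by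
    intro s hs
    have hs : 2 * s < p := by rw [mem_range] at hs; omega
    simp [Nat.choose_eq_zero_of_lt (hs.trans_le (Nat.le_add_right p _))]
  have hupper : ∀ u ∈ range m,
      (-1 : ZMod p) ^ (m + 1 + u) *
          ∑ t ∈ range p, 2 ^ t * ((2 * (m + 1 + u)).choose (p + t) : ZMod p) =
        -3 * (-1) ^ m * (-9) ^ u := by
    intro u hu
    have hu : 2 * u + 1 < p := by rw [mem_range] at hu; omega
    rw [show 2 * (m + 1 + u) = p + (2 * u + 1) by omega,
      sum_range_pow_mul_choose_prime_add 2 hu,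
      show (-9 : ZMod p) ^ u = (-1) ^ u * 3 ^ (2 * u) by rw [pow_mul, ← mul_pow]; norm_num]
    ring
  nth_rw 1 [show range p = range (m + 1 + m) by congr 1; omega]
  rw [sum_range_add, sum_eq_zero hvanish, zero_add, sum_congr rfl hupper, mul_sum]

theorem stmt_10 (p : ℕ) (hp : p.Prime) (h5 : 5 < p) :
    (10 * ∑ s ∈ Finset.range p,
        (-1 : ℤ) ^ s * ∑ t ∈ Finset.range p, 2 ^ t * ((2 * s).choose (p + t) : ℤ)) ≡
      3 * (1 - (-1) ^ ((p - 1) / 2)) [ZMOD (p : ℤ)] := by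
  have : Fact p.Prime := ⟨hp⟩
  obtain ⟨m, hm⟩ := hp.odd_of_ne_two (by omega)
  have h3 : (3 : ZMod p) ≠ 0 := by
    intro h
    have := (ZMod.natCast_eq_zero_iff 3 p).mp (by exact_mod_cast h)
    exact absurd (Nat.le_of_dvd three_pos this) (by omega)
  have hfermat : (-9 : ZMod p) ^ m = (-1) ^ m := by
    rw [show (-9 : ZMod p) = -1 * 3 ^ 2 by norm_num, mul_pow, ← pow_mul,
      show 2 * m = p - 1 by omega, ZMod.pow_card_sub_one_eq_one h3, mul_one]
  have hgeom := geom_sum_mul (-9 : ZMod p) m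
  have hsq : ((-1 : ZMod p) ^ m) ^ 2 = 1 := by rw [← pow_mul, pow_mul', neg_one_sq, one_pow]
  rw [← ZMod.intCast_eq_intCast_iff, show (p - 1) / 2 = m by omega]
  push_cast
  rw [ZMod.sum_neg_one_pow_mul_sum_two_pow_mul_choose hm]
  linear_combination (3 * (-1 : ZMod p) ^ m) * hgeom + 3 * (-1 : ZMod p) ^ m * hfermat + 3 * hsq
end

section
/- Let p > 3 be a prime. Then, in the ring ℤ/p²ℤ, 2^p · p · ∑_{k ∈ ℕ, 0 < 3k < p} 2^k · binom(3k, k) · k^{-1} = 3(2 − 2^p), where k^{-1} denotes the inverse of k in ℤ/p²ℤ (each such k satisfies 0 < k < p, so k is invertible modulo p²). -/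
/-!
By `3k · binom(p, 3k) ≡ -(-1)^k p (mod p²)`, the terms `p k⁻¹ 2^k binom(3k, k)` of the sum
are `-3 (-2)^k binom(3k, k) binom(p, 3k)`, so up to the term `k = 0` the sum is `-3` times
`A = ∑ (-2)^k binom(3k, k) binom(p, 3k)`, the coefficient of `X^{2p}` in `(X³ + X² - 2)^p`.
Over `ℤ[i]` this cubic splits as `(X - 1)(X + 1 - i)(X + 1 + i)`, and as
`(X + a)^p = X^p + a^p + p E` with `E` supported in degrees `1, …, p - 1`, the coefficient
of `X^{2p}` in `∏ (X + a)^p` is `∑ a^p` modulo `p²`. Hence `A ≡ -1 + t (mod p²)` for the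
integer `t = (1 + i)^p + (1 - i)^p`. Now `t² = 2^{p+1}` and `t ≡ 2 (mod p)`, so `t = ±2w`
with `w = 2^{(p-1)/2}` and `p ∣ w ∓ 1`, whence `t - 1 - 2^{p-1} = -(w ∓ 1)²` vanishes modulo
`p²`. So `A ≡ 2^{p-1}`, and the identity follows since `(2^{p-1} - 1)² ≡ 0 (mod p²)`.
-/

open Finset Polynomial

namespace Polynomial

variable {R : Type*} [CommRing R]

theorem exists_X_add_C_pow_eq {p : ℕ} (hp : p.Prime) (a : R) :
    ∃ E : R[X], (X + C a) ^ p = X ^ p + C (a ^ p) + C (p : R) * E ∧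
      E.coeff 0 = 0 ∧ ∀ m, p ≤ m → E.coeff m = 0 := by
  refine ⟨∑ j ∈ Ico 1 p, C (a ^ (p - j) * ((p.choose j / p : ℕ) : R)) * X ^ j, ?_, ?_, ?_⟩
  · rw [add_pow, sum_range_succ, range_eq_Ico, sum_eq_sum_Ico_succ_bot hp.pos, mul_sum]
    have hterm : ∀ j ∈ Ico 1 p, X ^ j * C a ^ (p - j) * (p.choose j : R[X]) =
        C (p : R) * (C (a ^ (p - j) * ((p.choose j / p : ℕ) : R)) * X ^ j) := by
      intro j hj
      obtain ⟨hj0, hjp⟩ := mem_Ico.mp hj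
      obtain ⟨m, hm⟩ := hp.dvd_choose_self (by omega) hjp
      rw [hm, Nat.mul_div_cancel_left _ hp.pos]
      simp only [Nat.cast_mul, map_mul, map_pow, map_natCast]
      ring
    rw [sum_congr rfl hterm]
    simp only [pow_zero, Nat.sub_zero, Nat.choose_zero_right, Nat.sub_self, Nat.choose_self,
      Nat.cast_one, mul_one, one_mul, map_pow]
    ring
  · simp [coeff_X_pow]
  · intro m hm
    simp only [finsetSum_coeff, coeff_C_mul_X_pow]
    exact sum_eq_zero fun j hj => if_neg (by simp at hj; omega)

theorem coeff_two_mul_mul_X_pow_add_C_mul_X_pow_add_C {p : ℕ} {E : R[X]} (h0 : E.coeff 0 = 0)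
    (hE : ∀ m, p ≤ m → E.coeff m = 0) (b c : R) :
    (E * (X ^ p + C b) * (X ^ p + C c)).coeff (2 * p) = 0 := by
  have h : E * (X ^ p + C b) * (X ^ p + C c) =
      E * X ^ (p + p) + C (b + c) * (E * X ^ p) + C (b * c) * E := by
    simp only [map_add, map_mul]
    ring
  rw [h, coeff_add, coeff_add, coeff_C_mul, coeff_C_mul, two_mul, coeff_mul_X_pow,
    coeff_mul_X_pow', if_pos le_rfl, Nat.sub_self, h0, hE p le_rfl, hE _ (by omega)]
  ring

theorem sq_dvd_coeff_two_mul_prod_X_add_C_pow_sub {p : ℕ} (hp : p.Prime) (a b c : R) :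
    (p : R) ^ 2 ∣
      (((X + C a) * (X + C b) * (X + C c)) ^ p).coeff (2 * p) - (a ^ p + b ^ p + c ^ p) := by
  obtain ⟨Ea, ha, ha0, hap⟩ := exists_X_add_C_pow_eq hp a
  obtain ⟨Eb, hb, hb0, hbp⟩ := exists_X_add_C_pow_eq hp b
  obtain ⟨Ec, hc, hc0, hcp⟩ := exists_X_add_C_pow_eq hp c
  set q : R[X] := C (p : R)
  set Ma : R[X] := X ^ p + C (a ^ p)
  set Mb : R[X] := X ^ p + C (b ^ p)
  set Mc : R[X] := X ^ p + C (c ^ p)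
  have hexpand : ((X + C a) * (X + C b) * (X + C c)) ^ p = Ma * Mb * Mc +
      q * (Ea * Mb * Mc + Eb * Ma * Mc + Ec * Ma * Mb) +
      q ^ 2 * (Ea * Eb * Mc + Ea * Ec * Mb + Eb * Ec * Ma + q * (Ea * Eb * Ec)) := by
    rw [mul_pow, mul_pow, ha, hb, hc]
    ring
  have hmain : (Ma * Mb * Mc).coeff (2 * p) = a ^ p + b ^ p + c ^ p := by
    have h : Ma * Mb * Mc = X ^ (p + p + p) + C (a ^ p + b ^ p + c ^ p) * X ^ (p + p) +
        C (a ^ p * b ^ p + a ^ p * c ^ p + b ^ p * c ^ p) * X ^ p + C (a ^ p * b ^ p * c ^ p) := by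
      simp only [Ma, Mb, Mc, map_add, map_mul]
      ring
    rw [h, two_mul]
    simp only [coeff_add, coeff_C_mul, coeff_X_pow, coeff_C]
    simp [hp.ne_zero]
  rw [hexpand, coeff_add, coeff_add, coeff_C_mul, ← map_pow, coeff_C_mul, hmain, coeff_add,
    coeff_add, coeff_two_mul_mul_X_pow_add_C_mul_X_pow_add_C ha0 hap,
    coeff_two_mul_mul_X_pow_add_C_mul_X_pow_add_C hb0 hbp,
    coeff_two_mul_mul_X_pow_add_C_mul_X_pow_add_C hc0 hcp]
  simp only [mul_zero, add_zero, add_sub_cancel_left]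
  exact dvd_mul_right _ _

end Polynomial

theorem coeff_two_mul_X_pow_three_add_X_sq_sub_two_pow (p : ℕ) :
    ((X ^ 3 + X ^ 2 - 2 : ℤ[X]) ^ p).coeff (2 * p) =
      ∑ k ∈ range (p + 1), (-2 : ℤ) ^ k * (3 * k).choose k * p.choose (3 * k) := by
  rw [show (X ^ 3 + X ^ 2 - 2 : ℤ[X]) = C (-2) + X ^ 2 * (X + 1) by simp; ring, add_pow,
    finsetSum_coeff]
  refine sum_congr rfl fun k hk => ?_
  have hkp : k ≤ p := Nat.lt_succ_iff.mp (mem_range.mp hk)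
  rw [mul_pow, ← pow_mul, ← map_pow, ← C_eq_natCast, mul_comm, ← mul_assoc, ← map_mul,
    coeff_C_mul, coeff_X_pow_mul', if_pos (by omega), coeff_X_add_one_pow,
    show 2 * p - 2 * (p - k) = 3 * k - k by omega]
  have h : ((p.choose (3 * k) * (3 * k).choose k : ℕ) : ℤ) =
      (p.choose k * (p - k).choose (3 * k - k) : ℕ) := by
    rw [Nat.choose_mul (by omega)]
  push_cast at h
  linear_combination (-(-2 : ℤ) ^ k) * h

theorem Int.sq_dvd_sub_one_sub_sq_of_sq_eq {p t w : ℤ} (hp : Prime p) (hp2 : ¬p ∣ 2)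
    (ht : t ^ 2 = (2 * w) ^ 2) (hpt : p ∣ t - 2) : p ^ 2 ∣ t - 1 - w ^ 2 := by
  rcases sq_eq_sq_iff_eq_or_eq_neg.mp ht with rfl | rfl
  · have hw : p ∣ w - 1 :=
      (hp.dvd_or_dvd (show p ∣ 2 * (w - 1) by rwa [mul_sub_one])).resolve_left hp2
    rw [show 2 * w - 1 - w ^ 2 = -(w - 1) ^ 2 by ring]
    exact (pow_dvd_pow_of_dvd hw 2).neg_right
  · have hw : p ∣ w + 1 :=
      (hp.dvd_or_dvd (show p ∣ 2 * (w + 1) by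
        rw [show 2 * (w + 1) = -(-(2 * w) - 2) by ring]; exact hpt.neg_right)).resolve_left hp2
    rw [show -(2 * w) - 1 - w ^ 2 = -(w + 1) ^ 2 by ring]
    exact (pow_dvd_pow_of_dvd hw 2).neg_right

namespace GaussianInt

open Zsqrtd

theorem map_X_pow_three_add_X_sq_sub_two :
    (X ^ 3 + X ^ 2 - 2 : ℤ[X]).map (Int.castRingHom GaussianInt) =
      (X + C (-1)) * (X + C (1 - sqrtd)) * (X + C (1 + sqrtd)) := by
  have hi : (C sqrtd : GaussianInt[X]) ^ 2 = -1 := by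
    rw [← map_pow, sq, dmuld]; simp
  simp only [Polynomial.map_sub, Polynomial.map_add, Polynomial.map_pow, map_X,
    Polynomial.map_ofNat, map_neg, map_one, map_sub, map_add]
  linear_combination (X - 1 : GaussianInt[X]) * hi

theorem exists_intCast_eq_one_add_sqrtd_pow_add (p : ℕ) :
    ∃ t : ℤ, (t : GaussianInt) = (1 + sqrtd) ^ p + (1 - sqrtd) ^ p := by
  have hstar : (1 - sqrtd : GaussianInt) = star (1 + sqrtd) := by ext <;> simp
  refine ⟨((1 + sqrtd) ^ p + (1 - sqrtd) ^ p : GaussianInt).re, ?_⟩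
  ext
  · simp
  · rw [hstar, ← star_pow, im_add, im_star, im_intCast, add_neg_cancel]

theorem sq_one_add_sqrtd_pow_add {p : ℕ} (hp : Odd p) :
    ((1 + sqrtd) ^ p + (1 - sqrtd) ^ p : GaussianInt) ^ 2 = 2 ^ (p + 1) := by
  have h1 : (1 + sqrtd : GaussianInt) ^ 2 = 2 * sqrtd := by ext <;> simp [sq]
  have h2 : (1 - sqrtd : GaussianInt) ^ 2 = -(2 * sqrtd) := by ext <;> simp [sq]
  have h3 : (1 + sqrtd : GaussianInt) * (1 - sqrtd) = 2 := by ext <;> simp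
  have hexpand : ∀ a b : GaussianInt,
      (a ^ p + b ^ p) ^ 2 = (a ^ 2) ^ p + (b ^ 2) ^ p + 2 * (a * b) ^ p :=
    fun a b => by ring
  rw [hexpand, h1, h2, h3, hp.neg_pow]
  ring

theorem dvd_one_add_sqrtd_pow_add_sub_two {p : ℕ} (hp : p.Prime) (hodd : Odd p) :
    (p : GaussianInt) ∣ (1 + sqrtd) ^ p + (1 - sqrtd) ^ p - 2 := by
  obtain ⟨r, hr⟩ := exists_add_pow_prime_eq hp (1 : GaussianInt) sqrtd
  obtain ⟨r', hr'⟩ := exists_add_pow_prime_eq hp (1 : GaussianInt) (-sqrtd)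
  rw [← sub_eq_add_neg] at hr'
  rw [hr, hr', hodd.neg_pow, one_pow]
  exact ⟨sqrtd * r - sqrtd * r', by ring⟩

end GaussianInt

open GaussianInt Zsqrtd in
theorem coeff_two_mul_X_pow_three_add_X_sq_sub_two_pow_modEq {p : ℕ} (hp : p.Prime)
    (hp2 : p ≠ 2) :
    ((X ^ 3 + X ^ 2 - 2 : ℤ[X]) ^ p).coeff (2 * p) ≡ 2 ^ (p - 1) [ZMOD (p : ℤ) ^ 2] := by
  have hodd : Odd p := hp.odd_of_ne_two hp2
  obtain ⟨m, hm⟩ := id hodd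
  obtain ⟨t, ht⟩ := exists_intCast_eq_one_add_sqrtd_pow_add p
  have hA : (p : ℤ) ^ 2 ∣ ((X ^ 3 + X ^ 2 - 2 : ℤ[X]) ^ p).coeff (2 * p) + 1 - t := by
    have h := sq_dvd_coeff_two_mul_prod_X_add_C_pow_sub hp (-1 : GaussianInt) (1 - sqrtd)
      (1 + sqrtd)
    rw [← map_X_pow_three_add_X_sq_sub_two, ← Polynomial.map_pow, coeff_map, eq_intCast,
      hodd.neg_one_pow, add_assoc, add_comm ((1 - sqrtd) ^ p), ← ht] at h
    refine (Zsqrtd.intCast_dvd_intCast (d := -1) _ _).mp ?_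
    convert h using 1 <;> push_cast <;> ring
  have ht2 : (p : ℤ) ^ 2 ∣ t - 1 - (2 ^ m) ^ 2 := by
    refine Int.sq_dvd_sub_one_sub_sq_of_sq_eq (Nat.prime_iff_prime_int.mp hp) ?_ ?_ ?_
    · exact_mod_cast fun h => hp2 ((Nat.prime_dvd_prime_iff_eq hp Nat.prime_two).mp h)
    · have h := sq_one_add_sqrtd_pow_add hodd
      rw [← ht, hm] at h
      rw [show (2 * 2 ^ m : ℤ) ^ 2 = 2 ^ (2 * m + 1 + 1) by ring]
      exact_mod_cast h
    · have h := dvd_one_add_sqrtd_pow_add_sub_two hp hodd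
      rw [← ht] at h
      exact (Zsqrtd.intCast_dvd_intCast (d := -1) _ _).mp (by exact_mod_cast h)
  rw [Int.modEq_iff_dvd, show p - 1 = m * 2 by omega, pow_mul, ← dvd_neg]
  convert hA.add ht2 using 1
  ring

theorem choose_prime_sub_one_modEq {p m : ℕ} (hp : p.Prime) (hm : m < p) :
    ((p - 1).choose m : ℤ) ≡ (-1) ^ m [ZMOD p] := by
  have := Fact.mk hp
  have hsum := congrArg (Int.cast : ℤ → ZMod p)
    (Int.alternating_sum_range_choose_eq_choose (n := p - 1) (m := m))
  rw [Nat.sub_add_cancel hp.pos] at hsum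
  push_cast at hsum
  rw [sum_eq_single 0 (fun k hk hk0 => ?_) (by simp)] at hsum
  · rw [pow_zero, Nat.choose_zero_right, Nat.cast_one, one_mul] at hsum
    rw [← ZMod.intCast_eq_intCast_iff]
    have hsq : ((-1 : ZMod p) ^ m) ^ 2 = 1 := by rw [pow_right_comm, neg_one_sq, one_pow]
    push_cast
    linear_combination -(-1 : ZMod p) ^ m * hsum - ((p - 1).choose m : ZMod p) * hsq
  · rw [(ZMod.natCast_eq_zero_iff _ p).mpr (hp.dvd_choose_self hk0 (by simp at hk; omega)),
      mul_zero]

theorem mul_choose_prime_modEq {p j : ℕ} (hp : p.Prime) (hj0 : 0 < j) (hjp : j < p) :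
    (j * p.choose j : ℤ) ≡ (-1) ^ (j - 1) * p [ZMOD p ^ 2] := by
  obtain ⟨i, rfl⟩ : ∃ i, j = i + 1 := ⟨j - 1, by omega⟩
  have hnat := Nat.add_one_mul_choose_eq (p - 1) i
  rw [Nat.sub_add_cancel hp.pos] at hnat
  have h := (choose_prime_sub_one_modEq hp (by omega : i < p)).mul_left' (c := p)
  have hcast : ((i + 1 : ℕ) : ℤ) * p.choose (i + 1) = p * (p - 1).choose i := by
    rw [mul_comm]
    exact_mod_cast hnat.symm
  rw [hcast, Nat.add_sub_cancel, sq, mul_comm ((-1 : ℤ) ^ i)]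
  exact h

theorem natCast_mul_inv_eq_neg_three_mul {p k : ℕ} (hp : p.Prime) (hk : 0 < k) (hkp : 3 * k < p) :
    (p : ZMod (p ^ 2)) * (k : ZMod (p ^ 2))⁻¹ = -3 * (-1) ^ k * p.choose (3 * k) := by
  have h := (ZMod.intCast_eq_intCast_iff _ _ (p ^ 2)).mpr
    (mul_choose_prime_modEq hp (j := 3 * k) (by omega) hkp)
  push_cast at h
  have hsign : (-1 : ZMod (p ^ 2)) ^ (3 * k - 1) = -(-1) ^ k := by
    rw [neg_one_pow_eq_pow_mod_two, show (3 * k - 1) % 2 = (k + 1) % 2 by omega,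
      ← neg_one_pow_eq_pow_mod_two]
    ring
  have hcop : Nat.Coprime k (p ^ 2) :=
    (Nat.coprime_comm.mp
      ((hp.coprime_iff_not_dvd).mpr (Nat.not_dvd_of_pos_of_lt hk (by omega)))).pow_right 2
  have hinv := ZMod.coe_mul_inv_eq_one k hcop
  have hsq : ((-1 : ZMod (p ^ 2)) ^ k) ^ 2 = 1 := by rw [pow_right_comm, neg_one_sq, one_pow]
  rw [hsign] at h
  linear_combination (-1 : ZMod (p ^ 2)) ^ k * (k : ZMod (p ^ 2))⁻¹ * h
    - (p : ZMod (p ^ 2)) * (k : ZMod (p ^ 2))⁻¹ * hsq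
    - 3 * (-1 : ZMod (p ^ 2)) ^ k * (p.choose (3 * k) : ZMod (p ^ 2)) * hinv

theorem sum_range_succ_mul_choose_three_mul {R : Type*} [CommSemiring R] {p : ℕ}
    (hp3 : ¬3 ∣ p) (g : ℕ → R) :
    ∑ k ∈ range (p + 1), g k * p.choose (3 * k) =
      g 0 + ∑ k ∈ (range p).filter (fun k => 0 < 3 * k ∧ 3 * k < p),
        g k * p.choose (3 * k) := by
  have hsub : (range p).filter (fun k => 0 < 3 * k ∧ 3 * k < p) ⊆ Ico 1 (p + 1) := by
    intro k
    simp only [mem_filter, mem_range, mem_Ico]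
    omega
  rw [range_eq_Ico, sum_eq_sum_Ico_succ_bot (Nat.succ_pos p),
    ← sum_subset hsub fun k hk hkS => ?_]
  · simp
  · simp only [mem_filter, mem_range, mem_Ico, not_and] at hk hkS
    rw [Nat.choose_eq_zero_of_lt (by omega), Nat.cast_zero, mul_zero]

theorem sq_pow_sub_one_sub_one_eq_zero {p : ℕ} (hp : p.Prime) {a : ℤ} (ha : IsCoprime a p) :
    ((a : ZMod (p ^ 2)) ^ (p - 1) - 1) ^ 2 = 0 := by
  obtain ⟨q, hq⟩ := Int.prime_dvd_pow_sub_one hp ha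
  have h := congrArg (fun x : ℤ => (x : ZMod (p ^ 2)) ^ 2) hq
  push_cast at h
  rw [h, mul_pow, ← Nat.cast_pow, ZMod.natCast_self, zero_mul]

theorem stmt_12 (p : ℕ) (hp : p.Prime) (h3 : 3 < p) :
    ((2 : ZMod (p ^ 2)) ^ p * (p : ZMod (p ^ 2)) *
        ∑ k ∈ (Finset.range p).filter (fun k => 0 < 3 * k ∧ 3 * k < p),
          2 ^ k * ((3 * k).choose k : ZMod (p ^ 2)) * (k : ZMod (p ^ 2))⁻¹) =
      3 * (2 - 2 ^ p) := by
  have hp3 : ¬3 ∣ p := fun h => by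
    have := (Nat.prime_dvd_prime_iff_eq Nat.prime_three hp).mp h
    omega
  have hA := (ZMod.intCast_eq_intCast_iff _ _ (p ^ 2)).mpr
    (coeff_two_mul_X_pow_three_add_X_sq_sub_two_pow_modEq hp (by omega))
  rw [coeff_two_mul_X_pow_three_add_X_sq_sub_two_pow, sum_range_succ_mul_choose_three_mul hp3] at hA
  push_cast [Nat.choose_self] at hA
  have hterm : ∀ k ∈ (range p).filter (fun k => 0 < 3 * k ∧ 3 * k < p),
      (p : ZMod (p ^ 2)) * (2 ^ k * ((3 * k).choose k : ZMod (p ^ 2)) * (k : ZMod (p ^ 2))⁻¹) =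
        -3 * ((-2) ^ k * (3 * k).choose k * p.choose (3 * k)) := by
    intro k hk
    simp only [mem_filter, mem_range] at hk
    rw [neg_pow]
    linear_combination (2 ^ k * ((3 * k).choose k : ZMod (p ^ 2))) *
      natCast_mul_inv_eq_neg_three_mul hp (by omega) hk.2.2
  have hfermat := sq_pow_sub_one_sub_one_eq_zero hp (a := 2)
    (Nat.isCoprime_iff_coprime.mpr ((Nat.coprime_primes Nat.prime_two hp).mpr (by omega)))
  push_cast at hfermat
  have h2p : (2 : ZMod (p ^ 2)) ^ p = 2 * 2 ^ (p - 1) := by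
    rw [← pow_succ', Nat.sub_add_cancel hp.pos]
  rw [mul_assoc, mul_sum, sum_congr rfl hterm, ← mul_sum]
  linear_combination (-3 * (2 : ZMod (p ^ 2)) ^ p) * hA
    + (6 - 3 * (2 : ZMod (p ^ 2)) ^ (p - 1)) * h2p
    - 6 * hfermat
end

section
/- Let p be a prime and let k be a natural number with 2p ≤ 3k ≤ 3p − 3. Then p divides binom(3k, k). -/
/-!
Since `2p ≤ 3k < 3p` and `k < p`, the last base-`p` digit of `3k` is `3k - 2p`, which is smaller
than the last digit `k` of `k`. By Lucas' theorem `binom(3k, k)` is then congruent modulo `p` to a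
multiple of `binom(3k - 2p, k) = 0`.
-/

theorem Nat.Prime.dvd_choose_of_mod_lt_mod {p n k : ℕ} (hp : p.Prime) (h : n % p < k % p) :
    p ∣ n.choose k := by
  have := Fact.mk hp
  have hlucas := Choose.choose_modEq_choose_mod_mul_choose_div_nat (n := n) (k := k) (p := p)
  rw [Nat.choose_eq_zero_of_lt h, zero_mul] at hlucas
  exact Nat.modEq_zero_iff_dvd.mp hlucas

theorem stmt_15 (p : ℕ) (hp : p.Prime) (k : ℕ) (h1 : 2 * p ≤ 3 * k) (h2 : 3 * k ≤ 3 * p - 3) :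
    p ∣ (3 * k).choose k := by
  have hkp : k < p := by have := hp.two_le; omega
  have hk : k % p = k := Nat.mod_eq_of_lt hkp
  have h3k : 3 * k % p = 3 * k - 2 * p := by
    rw [← Nat.sub_mul_mod (by omega : p * 2 ≤ 3 * k), Nat.mod_eq_of_lt (by omega)]
    omega
  exact hp.dvd_choose_of_mod_lt_mod (by omega)
end

section
/- Let p be an odd prime. Then ∑_{s=0}^{p-1} (-1)^s · binom(2s, p−1) ≡ (-1)^{(p-1)/2} (mod p). -/
/-!
By Lucas's theorem, `binom(n, p - 1) ≡ binom(n % p, p - 1) (mod p)`, which vanishes unless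
`n ≡ -1 (mod p)`. For `s < p` the even number `2s ≤ 2p - 2` is `≡ -1 (mod p)` only when
`2s = p - 1`, so the sum reduces mod `p` to its term at `s = (p - 1) / 2`, namely
`(-1) ^ ((p - 1) / 2) * binom(p - 1, p - 1)`.
-/

theorem Nat.cast_choose_pred_eq_zero_of_mod_ne {p : ℕ} [Fact p.Prime] {n : ℕ}
    (h : n % p ≠ p - 1) : (n.choose (p - 1) : ZMod p) = 0 := by
  have hp := (Fact.out : p.Prime).pos
  have hlucas : n.choose (p - 1) ≡ (n % p).choose (p - 1) * (n / p).choose 0 [MOD p] := by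
    simpa [Nat.mod_eq_of_lt (Nat.sub_lt hp one_pos), Nat.div_eq_of_lt (Nat.sub_lt hp one_pos)]
      using Choose.choose_modEq_choose_mod_mul_choose_div_nat (n := n) (k := p - 1) (p := p)
  have hlt : n % p < p - 1 := by have := Nat.mod_lt n hp; omega
  rw [(ZMod.natCast_eq_natCast_iff _ _ _).mpr hlucas, Nat.choose_eq_zero_of_lt hlt]
  simp

theorem Nat.two_mul_mod_ne_pred {p s : ℕ} (hodd : Odd p) (hs : s < p) (hne : s ≠ (p - 1) / 2) :
    2 * s % p ≠ p - 1 := by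
  obtain ⟨k, rfl⟩ := hodd
  rcases lt_or_ge (2 * s) (2 * k + 1) with h | h
  · rw [Nat.mod_eq_of_lt h]; omega
  · rw [Nat.mod_eq_sub_mod h, Nat.mod_eq_of_lt (by omega)]; omega

theorem stmt_17 (p : ℕ) (hp : p.Prime) (hodd : Odd p) :
    (∑ s ∈ Finset.range p, (-1 : ℤ) ^ s * ((2 * s).choose (p - 1) : ℤ)) ≡
      (-1) ^ ((p - 1) / 2) [ZMOD (p : ℤ)] := by
  have : Fact p.Prime := ⟨hp⟩
  have hmid : 2 * ((p - 1) / 2) = p - 1 := by obtain ⟨k, rfl⟩ := hodd; omega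
  rw [← ZMod.intCast_eq_intCast_iff]
  push_cast
  rw [Finset.sum_eq_single ((p - 1) / 2), hmid, Nat.choose_self, Nat.cast_one, mul_one]
  · intro s hs hne
    rw [Nat.cast_choose_pred_eq_zero_of_mod_ne
      (Nat.two_mul_mod_ne_pred hodd (Finset.mem_range.mp hs) hne), mul_zero]
  · exact fun h ↦ absurd (Finset.mem_range.mpr (by have := hp.two_le; omega)) h
end

section
/- Let p be an odd prime and let s be an integer with (p+1)/2 ≤ s ≤ p−1. Then ∑_{r=0}^{2s−p} 2^r · binom(2s, p+r) ≡ 3^{2s−p} (mod p). -/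
/-!
Write `2s = p + m` with `0 ≤ m < p`. By Lucas's theorem
`binom(p + m, p + r) ≡ binom(m, r) * binom(1, 1)` modulo `p`, so the sum is congruent to
`∑ 2^r binom(m, r) = (2 + 1)^m`.
-/

open Finset

theorem Choose.choose_prime_add_prime_add_modEq_s18 {p m r : ℕ} (hp : p.Prime) (hm : m < p)
    (hr : r < p) : ((p + m).choose (p + r) : ℤ) ≡ m.choose r [ZMOD p] := by
  have : Fact p.Prime := ⟨hp⟩
  have hp0 : 0 < p := hp.pos
  simpa [Nat.add_mod_left, Nat.mod_eq_of_lt, Nat.add_div_left, Nat.div_eq_of_lt, hm, hr, hp0]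
    using Choose.choose_modEq_choose_mod_mul_choose_div (n := p + m) (k := p + r) (p := p)

theorem sum_range_two_pow_mul_choose {R : Type*} [CommSemiring R] (m : ℕ) :
    ∑ r ∈ range (m + 1), (2 : R) ^ r * m.choose r = 3 ^ m := by
  simpa [mul_comm] using (add_pow (2 : R) 1 m).symm.trans (by norm_num)

theorem stmt_18_general (p : ℕ) (hp : p.Prime) (s : ℕ)
    (h1 : (p + 1) / 2 ≤ s) (h2 : s ≤ p - 1) :
    (∑ r ∈ Finset.range (2 * s - p + 1), 2 ^ r * ((2 * s).choose (p + r) : ℤ)) ≡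
      3 ^ (2 * s - p) [ZMOD (p : ℤ)] := by
  have hp2 := hp.two_le
  obtain ⟨m, hs, hm⟩ : ∃ m, 2 * s = p + m ∧ m < p := ⟨2 * s - p, by omega, by omega⟩
  rw [hs, Nat.add_sub_cancel_left]
  calc ∑ r ∈ range (m + 1), 2 ^ r * ((p + m).choose (p + r) : ℤ)
      ≡ ∑ r ∈ range (m + 1), 2 ^ r * (m.choose r : ℤ) [ZMOD p] :=
        Int.ModEq.sum fun r hr =>
          have hrp : r < p := by have := mem_range.mp hr; omega
          (Choose.choose_prime_add_prime_add_modEq_s18 hp hm hrp).mul_left _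
    _ = 3 ^ m := sum_range_two_pow_mul_choose m

theorem stmt_18 (p : ℕ) (hp : p.Prime) (hodd : Odd p) (s : ℕ)
    (h1 : (p + 1) / 2 ≤ s) (h2 : s ≤ p - 1) :
    (∑ r ∈ Finset.range (2 * s - p + 1), 2 ^ r * ((2 * s).choose (p + r) : ℤ)) ≡
      3 ^ (2 * s - p) [ZMOD (p : ℤ)] :=
  stmt_18_general p hp s h1 h2
end
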